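/- arXiv:2407.18692 — 5 statements merged into one kernel-verified Lean document; each statement's English description precedes it below -/
import Mathlib

section
/- Let (g,J) and (g',J') be 8-dimensional nilpotent Lie algebras with weakly non-nilpotent complex structures. If J and J' are equivalent, then the strongly non-nilpotent complex structures J̃_1 and J̃'_1 induced, respectively, on the 6-dimensional quotient Lie algebras g̃_1 = g/a_1(J) and g̃'_1 = g'/a_1(J') are equivalent. -/
noncomputable section

open Complex Module
open scoped TensorProduct

namespace Paper

/-- The ascending central series of a real Lie algebra. -/
def ascSeries (g : Type*) [LieRing g] [LieAlgebra ℝ g] : ℕ → Submodule ℝ g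
  | 0 => ⊥
  | k + 1 =>
    { carrier := {X : g | ∀ Y : g, ⁅X, Y⁆ ∈ ascSeries g k}
      add_mem' := fun ha hb Y => by
        rw [add_lie]; exact Submodule.add_mem _ (ha Y) (hb Y)
      zero_mem' := fun Y => by rw [zero_lie]; exact Submodule.zero_mem _
      smul_mem' := fun c x hx Y => by rw [smul_lie]; exact Submodule.smul_mem _ c (hx Y) }

/-- A Lie algebra is nilpotent when its ascending central series reaches the whole algebra. -/
def IsNilpotentLie (g : Type*) [LieRing g] [LieAlgebra ℝ g] : Prop :=
  ∃ s : ℕ, ascSeries g s = ⊤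

/-- A (integrable) complex structure on a real Lie algebra. -/
structure ComplexStructure (g : Type*) [LieRing g] [LieAlgebra ℝ g] where
  J : g →ₗ[ℝ] g
  j_sq : ∀ X : g, J (J X) = -X
  integrable : ∀ X Y : g, ⁅X, Y⁆ + J ⁅J X, Y⁆ + J ⁅X, J Y⁆ - ⁅J X, J Y⁆ = 0

namespace ComplexStructure

variable {g g' : Type*} [LieRing g] [LieAlgebra ℝ g] [LieRing g'] [LieAlgebra ℝ g']

/-- The ascending `J`-compatible series `a_k(J)`. -/
def aSeries (Jc : ComplexStructure g) : ℕ → Submodule ℝ g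
  | 0 => ⊥
  | k + 1 =>
    { carrier := {X : g | (∀ Y : g, ⁅X, Y⁆ ∈ aSeries Jc k) ∧ (∀ Y : g, ⁅Jc.J X, Y⁆ ∈ aSeries Jc k)}
      add_mem' := fun ha hb => by
        refine ⟨fun Y => ?_, fun Y => ?_⟩
        · rw [add_lie]; exact Submodule.add_mem _ (ha.1 Y) (hb.1 Y)
        · rw [map_add, add_lie]; exact Submodule.add_mem _ (ha.2 Y) (hb.2 Y)
      zero_mem' := by
        refine ⟨fun Y => ?_, fun Y => ?_⟩
        · rw [zero_lie]; exact Submodule.zero_mem _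
        · rw [map_zero, zero_lie]; exact Submodule.zero_mem _
      smul_mem' := fun c x hx => by
        refine ⟨fun Y => ?_, fun Y => ?_⟩
        · rw [smul_lie]; exact Submodule.smul_mem _ c (hx.1 Y)
        · rw [map_smul, smul_lie]; exact Submodule.smul_mem _ c (hx.2 Y) }

/-- Quasi-nilpotent complex structure: `a₁(J) ≠ 0`. -/
def IsQuasiNilpotent (Jc : ComplexStructure g) : Prop := Jc.aSeries 1 ≠ ⊥

/-- Strongly non-nilpotent complex structure: `a₁(J) = 0`. -/
def IsSnN (Jc : ComplexStructure g) : Prop := Jc.aSeries 1 = ⊥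

/-- Weakly non-nilpotent complex structure: `a₁(J) ≠ 0` and the ascending compatible series
stabilizes strictly below `g`. -/
def IsWnN (Jc : ComplexStructure g) : Prop :=
  Jc.aSeries 1 ≠ ⊥ ∧ ∃ t : ℕ, Jc.aSeries t ≠ ⊤ ∧ ∀ l : ℕ, 1 ≤ l → Jc.aSeries (t + l) = Jc.aSeries t

/-- Non-nilpotent complex structure: the ascending compatible series never reaches `g`. -/
def IsNonNilpotent (Jc : ComplexStructure g) : Prop := ∀ t : ℕ, Jc.aSeries t ≠ ⊤

/-- Equivalence of complex structures. -/
def Equiv (Jc : ComplexStructure g) (Jc' : ComplexStructure g') : Prop :=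
  ∃ f : g ≃ₗ⁅ℝ⁆ g', ∀ X : g, f (Jc.J X) = Jc'.J (f X)

end ComplexStructure


/-- Corollary 2.9: if two WnN complex structures on 8-dimensional NLAs are equivalent, then the
induced (SnN) complex structures on the 6-dimensional quotients `g/a₁(J)` are equivalent. -/
theorem induced_SnN_equivalent
    {g g' : Type*} [LieRing g] [LieAlgebra ℝ g] [LieRing g'] [LieAlgebra ℝ g']
    (h8 : Module.finrank ℝ g = 8) (h8' : Module.finrank ℝ g' = 8)
    (hg : IsNilpotentLie g) (hg' : IsNilpotentLie g')
    (Jc : ComplexStructure g) (Jc' : ComplexStructure g')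
    (hw : Jc.IsWnN) (hw' : Jc'.IsWnN)
    (I : LieIdeal ℝ g) (hI : I.toSubmodule = Jc.aSeries 1)
    (I' : LieIdeal ℝ g') (hI' : I'.toSubmodule = Jc'.aSeries 1)
    (Jt : ComplexStructure (g ⧸ I))
    (hJt : ∀ X : g, Jt.J (LieSubmodule.Quotient.mk (N := I) X)
      = LieSubmodule.Quotient.mk (N := I) (Jc.J X))
    (Jt' : ComplexStructure (g' ⧸ I'))
    (hJt' : ∀ X : g', Jt'.J (LieSubmodule.Quotient.mk (N := I') X)
      = LieSubmodule.Quotient.mk (N := I') (Jc'.J X))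
    (hequiv : Jc.Equiv Jc') :
    Jt.Equiv Jt' := by
  obtain ⟨f, hf⟩ := hequiv
  -- membership characterization of `aSeries 1`
  have mem1 : ∀ (Jc : ComplexStructure g) (X : g), X ∈ Jc.aSeries 1 ↔
      (∀ Y : g, ⁅X, Y⁆ = 0) ∧ (∀ Y : g, ⁅Jc.J X, Y⁆ = 0) := by
    intro Jc X
    show ((∀ Y : g, ⁅X, Y⁆ ∈ Jc.aSeries 0) ∧ ∀ Y : g, ⁅Jc.J X, Y⁆ ∈ Jc.aSeries 0) ↔ _
    simp [ComplexStructure.aSeries, Submodule.mem_bot]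
  have mem1' : ∀ (Jc' : ComplexStructure g') (X : g'), X ∈ Jc'.aSeries 1 ↔
      (∀ Y : g', ⁅X, Y⁆ = 0) ∧ (∀ Y : g', ⁅Jc'.J X, Y⁆ = 0) := by
    intro Jc' X
    show ((∀ Y : g', ⁅X, Y⁆ ∈ Jc'.aSeries 0) ∧ ∀ Y : g', ⁅Jc'.J X, Y⁆ ∈ Jc'.aSeries 0) ↔ _
    simp [ComplexStructure.aSeries, Submodule.mem_bot]
  have hiff : ∀ X : g, X ∈ Jc.aSeries 1 ↔ f X ∈ Jc'.aSeries 1 := by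
    intro X
    rw [mem1, mem1']
    constructor
    · rintro ⟨h1, h2⟩
      constructor
      · intro Y
        calc ⁅f X, Y⁆ = ⁅f X, f (f.symm Y)⁆ := by rw [f.apply_symm_apply]
          _ = f ⁅X, f.symm Y⁆ := (f.map_lie _ _).symm
          _ = 0 := by rw [h1]; exact f.toLieHom.map_zero
      · intro Y
        calc ⁅Jc'.J (f X), Y⁆ = ⁅f (Jc.J X), f (f.symm Y)⁆ := by
              rw [hf, f.apply_symm_apply]
          _ = f ⁅Jc.J X, f.symm Y⁆ := (f.map_lie _ _).symm
          _ = 0 := by rw [h2]; exact f.toLieHom.map_zero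
    · rintro ⟨h1, h2⟩
      constructor
      · intro Y
        have h := h1 (f Y)
        rw [← f.map_lie] at h
        have h' := congrArg f.symm h
        rw [f.symm_apply_apply] at h'
        rw [h']
        exact f.symm.toLieHom.map_zero
      · intro Y
        have h := h2 (f Y)
        rw [← hf, ← f.map_lie] at h
        have h' := congrArg f.symm h
        rw [f.symm_apply_apply] at h'
        rw [h']
        exact f.symm.toLieHom.map_zero
  have hmap : (I.toSubmodule).map (f.toLinearEquiv : g →ₗ[ℝ] g') = I'.toSubmodule := by
    ext x'
    simp only [Submodule.mem_map]
    constructor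
    · rintro ⟨x, hx, rfl⟩
      have hx1 : x ∈ Jc.aSeries 1 := hI ▸ hx
      have : f x ∈ Jc'.aSeries 1 := (hiff x).mp hx1
      exact hI' ▸ this
    · intro hx
      refine ⟨f.symm x', ?_, by simp⟩
      have hx1 : x' ∈ Jc'.aSeries 1 := hI' ▸ hx
      have : f (f.symm x') ∈ Jc'.aSeries 1 := by rwa [f.apply_symm_apply]
      exact hI ▸ ((hiff (f.symm x')).mpr this)
  let E : ((g ⧸ I) ≃ₗ[ℝ] (g' ⧸ I')) :=
    Submodule.Quotient.equiv I.toSubmodule I'.toSubmodule f.toLinearEquiv hmap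
  have he : ∀ X : g, E (LieSubmodule.Quotient.mk (N := I) X)
      = LieSubmodule.Quotient.mk (N := I') (f X) := by
    intro X
    show Submodule.Quotient.equiv I.toSubmodule I'.toSubmodule f.toLinearEquiv hmap
      (Submodule.Quotient.mk X) = _
    rw [Submodule.Quotient.equiv_apply, Submodule.mapQ_apply]
    rfl
  have hsurj : ∀ x : g ⧸ I, ∃ X : g, LieSubmodule.Quotient.mk (N := I) X = x :=
    fun x => Quotient.inductionOn' x fun X => ⟨X, rfl⟩
  refine ⟨{ toLieHom := { toLinearMap := E.toLinearMap, map_lie' := ?_ },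
            invFun := E.symm, left_inv := E.left_inv, right_inv := E.right_inv }, ?_⟩
  · intro x y
    obtain ⟨X, rfl⟩ := hsurj x
    obtain ⟨Y, rfl⟩ := hsurj y
    show E ⁅_, _⁆ = ⁅E _, E _⁆
    rw [← LieSubmodule.Quotient.mk_bracket, he, he, he, f.map_lie,
      LieSubmodule.Quotient.mk_bracket]
  · intro x
    obtain ⟨X, rfl⟩ := hsurj x
    show E (Jt.J _) = Jt'.J (E _)
    rw [hJt, he, he, hJt', hf]
end Paper
end
end

section
/- Let (g,J) be an 8-dimensional nilpotent Lie algebra with weakly non-nilpotent complex structure, and let t be the smallest integer for which the ascending J-compatible series satisfies {0} ≠ a_t(J) = a_{t+l}(J) ≠ g for all l ≥ 1. Then the quotient (g̃_t, J̃_t) = (g/a_t(J), induced structure) is a 6-dimensional nilpotent Lie algebra with strongly non-nilpotent complex structure; in particular dim a_t(J) = 2 and a_t(J) = a_1(J). -/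
noncomputable section

open Complex Module
open scoped TensorProduct

namespace Paper

/-!
The induced structure on `g ⧸ a_t(J)` is SnN, since its `a₁` pulls back to
`a_{t+1}(J) = a_t(J)`. Both `a_t(J)` and the quotient carry a complex structure, hence are
even-dimensional, so the quotient has dimension 2, 4 or 6, and it remains to rule out SnN
structures on nilpotent Lie algebras of dimension at most 4. For a nonzero central `Z`, SnN
means that `JZ` is not central, and integrability makes `A = ad (JZ)` commute with `J`. Then
`ker A ∋ Z` and `im A ≠ 0` are `J`-invariant, so both are 2-dimensional; as `A` is nilpotent,
`im A ⊓ ker A` is a nonzero `J`-invariant subspace too, which forces `im A = ker A ∋ JZ`.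
Writing `JZ = [JZ, W]` exhibits the eigenvalue `-1` of the nilpotent map `ad W`.
Finally `dim a_t(J) = 2` leaves no room between `a₁(J) ≠ 0` and `a_t(J)`.
-/

theorem even_finrank_of_apply_apply_eq_neg {V : Type*} [AddCommGroup V] [Module ℝ V]
    (J : V →ₗ[ℝ] V) (hJ : ∀ x, J (J x) = -x) : Even (finrank ℝ V) := by
  have hdet : LinearMap.det J ^ 2 = (-1) ^ finrank ℝ V := by
    have hJJ : J ∘ₗ J = (-1 : ℝ) • LinearMap.id := LinearMap.ext fun x => by simp [hJ]
    rw [sq, ← LinearMap.det_comp, hJJ, LinearMap.det_smul, LinearMap.det_id, mul_one]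
  by_contra hodd
  rw [(Nat.not_even_iff_odd.mp hodd).neg_one_pow] at hdet
  nlinarith [sq_nonneg (LinearMap.det J)]

theorem even_finrank_of_apply_mem {V : Type*} [AddCommGroup V] [Module ℝ V]
    (J : V →ₗ[ℝ] V) (hJ : ∀ x, J (J x) = -x) {p : Submodule ℝ V} (hp : ∀ x ∈ p, J x ∈ p) :
    Even (finrank ℝ p) :=
  even_finrank_of_apply_apply_eq_neg (J.restrict hp) fun x => Subtype.ext (hJ x)

theorem two_le_finrank_of_apply_mem {V : Type*} [AddCommGroup V] [Module ℝ V]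
    [FiniteDimensional ℝ V] (J : V →ₗ[ℝ] V) (hJ : ∀ x, J (J x) = -x) {p : Submodule ℝ V}
    (hp : ∀ x ∈ p, J x ∈ p) (hp0 : p ≠ ⊥) : 2 ≤ finrank ℝ p := by
  obtain ⟨n, hn⟩ := even_finrank_of_apply_mem J hJ hp
  have hpos : 0 < finrank ℝ p := Submodule.one_le_finrank_iff.mpr hp0
  omega

theorem range_inf_ker_ne_bot_of_isNilpotent {R M : Type*} [CommRing R] [AddCommGroup M]
    [Module R M] {f : Module.End R M} (hf : IsNilpotent f) (hf0 : f ≠ 0) :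
    LinearMap.range f ⊓ LinearMap.ker f ≠ ⊥ := by
  have : Nontrivial (Module.End R M) := nontrivial_of_ne f 0 hf0
  obtain ⟨k, hk⟩ : ∃ k, nilpotencyClass f = k + 2 := by
    have hpos := pos_nilpotencyClass_iff.mpr hf
    have hne : nilpotencyClass f ≠ 1 := fun h => hf0 (nilpotencyClass_eq_one.mp h)
    exact ⟨nilpotencyClass f - 2, by omega⟩
  obtain ⟨v, hv⟩ : ∃ v, (f ^ (k + 1)) v ≠ 0 := by
    by_contra! h
    exact pow_pred_nilpotencyClass hf (by rw [hk]; exact LinearMap.ext h)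
  refine (Submodule.ne_bot_iff _).mpr ⟨(f ^ (k + 1)) v, ⟨⟨(f ^ k) v, ?_⟩, ?_⟩, hv⟩
  · rw [pow_succ', Module.End.mul_apply]
  · change (f * f ^ (k + 1)) v = 0
    rw [← pow_succ', ← hk, pow_nilpotencyClass hf, LinearMap.zero_apply]

theorem eq_zero_of_apply_eq_smul_of_isNilpotent {K M : Type*} [Field K] [AddCommGroup M]
    [Module K M] {f : Module.End K M} (hf : IsNilpotent f) {c : K} (hc : c ≠ 0) {v : M}
    (hv : f v = c • v) : v = 0 := by
  by_contra hv0
  have hc' := Module.End.HasEigenvalue.isNilpotent_of_isNilpotent hf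
    (Module.End.hasEigenvalue_of_hasEigenvector ⟨Module.End.mem_eigenspace_iff.mpr hv, hv0⟩)
  exact hc hc'.eq_zero

section Nilpotent

variable {g : Type*} [LieRing g] [LieAlgebra ℝ g]

theorem mem_ascSeries_one {X : g} : X ∈ ascSeries g 1 ↔ ∀ Y : g, ⁅X, Y⁆ = 0 := Iff.rfl

theorem ascSeries_one_ne_bot [Nontrivial g] (hg : IsNilpotentLie g) : ascSeries g 1 ≠ ⊥ := by
  intro h1
  obtain ⟨s, hs⟩ := hg
  have hbot : ∀ k, ascSeries g k = ⊥ := by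
    intro k
    induction k with
    | zero => rfl
    | succ k ih =>
      rw [← h1]
      ext X
      exact forall_congr' fun Y => by rw [ih]; rfl
  exact bot_ne_top (hbot s ▸ hs)

theorem isNilpotent_ad (hg : IsNilpotentLie g) (W : g) : IsNilpotent (LieAlgebra.ad ℝ g W) := by
  obtain ⟨s, hs⟩ := hg
  have key : ∀ k, ∀ X ∈ ascSeries g k, (LieAlgebra.ad ℝ g W ^ k) X = 0 := by
    intro k
    induction k with
    | zero => intro X hX; exact (Submodule.mem_bot ℝ).mp hX
    | succ k ih =>
      intro X hX
      rw [pow_succ, Module.End.mul_apply, LieAlgebra.ad_apply, ← lie_skew]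
      exact ih _ (neg_mem (hX W))
  exact ⟨s, LinearMap.ext fun X => key s X (hs ▸ Submodule.mem_top)⟩

theorem isNilpotentLie_quotient (hg : IsNilpotentLie g) (I : LieIdeal ℝ g) :
    IsNilpotentLie (g ⧸ I) := by
  obtain ⟨s, hs⟩ := hg
  have key : ∀ k, ∀ X ∈ ascSeries g k,
      LieSubmodule.Quotient.mk (N := I) X ∈ ascSeries (g ⧸ I) k := by
    intro k
    induction k with
    | zero => intro X hX; rw [(Submodule.mem_bot ℝ).mp hX]; exact zero_mem (ascSeries (g ⧸ I) 0)
    | succ k ih =>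
      intro X hX q
      obtain ⟨Y, rfl⟩ := LieSubmodule.Quotient.surjective_mk' I q
      exact ih _ (hX Y)
  refine ⟨s, eq_top_iff.mpr fun q _ => ?_⟩
  obtain ⟨X, rfl⟩ := LieSubmodule.Quotient.surjective_mk' I q
  exact key s X (hs ▸ Submodule.mem_top)

end Nilpotent

namespace ComplexStructure

variable {g : Type*} [LieRing g] [LieAlgebra ℝ g] (Jc : ComplexStructure g)

theorem J_mem_aSeries {k : ℕ} {X : g} (hX : X ∈ Jc.aSeries k) : Jc.J X ∈ Jc.aSeries k := by
  cases k with
  | zero => rw [(Submodule.mem_bot ℝ).mp hX, map_zero]; exact zero_mem _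
  | succ k => exact ⟨hX.2, fun Y => by rw [Jc.j_sq, neg_lie]; exact neg_mem (hX.1 Y)⟩

theorem aSeries_monotone : Monotone Jc.aSeries := by
  refine monotone_nat_of_le_succ fun k => ?_
  induction k with
  | zero => exact bot_le
  | succ k ih => exact fun X hX => ⟨fun Y => ih (hX.1 Y), fun Y => ih (hX.2 Y)⟩

theorem two_le_finrank_aSeries [FiniteDimensional ℝ g] {k : ℕ} (hk : Jc.aSeries k ≠ ⊥) :
    2 ≤ finrank ℝ (Jc.aSeries k) :=
  two_le_finrank_of_apply_mem Jc.J Jc.j_sq (fun _ => Jc.J_mem_aSeries) hk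

theorem lie_J_J_of_mem_center {Z : g} (hZ : Z ∈ ascSeries g 1) (Y : g) :
    ⁅Jc.J Z, Jc.J Y⁆ = Jc.J ⁅Jc.J Z, Y⁆ := by
  have h := Jc.integrable Z Y
  rw [mem_ascSeries_one.mp hZ, mem_ascSeries_one.mp hZ, map_zero, zero_add, add_zero] at h
  exact (sub_eq_zero.mp h).symm

theorem not_isSnN_of_finrank_le_four [FiniteDimensional ℝ g] [Nontrivial g]
    (hg : IsNilpotentLie g) (h4 : finrank ℝ g ≤ 4) : ¬ Jc.IsSnN := by
  intro hSnN
  obtain ⟨Z, hZ, hZ0⟩ := (Submodule.ne_bot_iff _).mp (ascSeries_one_ne_bot hg)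
  have hJZ : Jc.J Z ∉ ascSeries g 1 := fun hJZ =>
    hZ0 ((Submodule.mem_bot ℝ).mp (hSnN ▸ (⟨hZ, hJZ⟩ : Z ∈ Jc.aSeries 1)))
  set A := LieAlgebra.ad ℝ g (Jc.J Z)
  have hAJ : ∀ Y, A (Jc.J Y) = Jc.J (A Y) := Jc.lie_J_J_of_mem_center hZ
  have hrange_J : ∀ v ∈ LinearMap.range A, Jc.J v ∈ LinearMap.range A := by
    rintro _ ⟨Y, rfl⟩
    exact ⟨Jc.J Y, hAJ Y⟩
  have hker_J : ∀ v ∈ LinearMap.ker A, Jc.J v ∈ LinearMap.ker A := fun v hv => by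
    rw [LinearMap.mem_ker, hAJ, LinearMap.mem_ker.mp hv, map_zero]
  have hJZ_ker : Jc.J Z ∈ LinearMap.ker A := lie_self _
  have hA0 : A ≠ 0 := fun h => hJZ (mem_ascSeries_one.mpr (LinearMap.congr_fun h))
  have hker : 2 ≤ finrank ℝ (LinearMap.ker A) :=
    two_le_finrank_of_apply_mem Jc.J Jc.j_sq hker_J
      ((Submodule.ne_bot_iff _).mpr ⟨Jc.J Z, hJZ_ker, fun h => hJZ (h ▸ zero_mem _)⟩)
  have hrange : 2 ≤ finrank ℝ (LinearMap.range A) :=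
    two_le_finrank_of_apply_mem Jc.J Jc.j_sq hrange_J (LinearMap.range_eq_bot.not.mpr hA0)
  have hrank := LinearMap.finrank_range_add_finrank_ker A
  have hinf : 2 ≤ finrank ℝ (LinearMap.range A ⊓ LinearMap.ker A : Submodule ℝ g) :=
    two_le_finrank_of_apply_mem Jc.J Jc.j_sq
      (fun v hv => ⟨hrange_J v hv.1, hker_J v hv.2⟩)
      (range_inf_ker_ne_bot_of_isNilpotent (isNilpotent_ad hg _) hA0)
  have hrange_le : LinearMap.range A ≤ LinearMap.ker A :=
    (Submodule.eq_of_le_of_finrank_le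
      (inf_le_left : LinearMap.range A ⊓ LinearMap.ker A ≤ _) (by omega)).symm ▸ inf_le_right
  have hrange_eq : LinearMap.range A = LinearMap.ker A :=
    Submodule.eq_of_le_of_finrank_le hrange_le (by omega)
  obtain ⟨W, hW⟩ : Jc.J Z ∈ LinearMap.range A := hrange_eq ▸ hJZ_ker
  have hWJZ : LieAlgebra.ad ℝ g W (Jc.J Z) = (-1 : ℝ) • Jc.J Z := by
    rw [LieAlgebra.ad_apply, ← lie_skew, neg_one_smul]
    exact congrArg Neg.neg hW
  exact hJZ ((eq_zero_of_apply_eq_smul_of_isNilpotent (isNilpotent_ad hg W) (by norm_num) hWJZ) ▸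
    zero_mem _)

theorem isSnN_quotient {t : ℕ} (hstab : Jc.aSeries (t + 1) = Jc.aSeries t) (I : LieIdeal ℝ g)
    (hI : I.toSubmodule = Jc.aSeries t) (Jt : ComplexStructure (g ⧸ I))
    (hJt : ∀ X : g, Jt.J (LieSubmodule.Quotient.mk (N := I) X)
      = LieSubmodule.Quotient.mk (N := I) (Jc.J X)) :
    Jt.IsSnN := by
  refine eq_bot_iff.mpr fun q hq => (Submodule.mem_bot ℝ).mpr ?_
  obtain ⟨X, rfl⟩ := LieSubmodule.Quotient.surjective_mk' I q
  have hmk : ∀ Y : g, LieSubmodule.Quotient.mk (N := I) Y ∈ Jt.aSeries 0 → Y ∈ Jc.aSeries t :=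
    fun Y h => hI ▸ (LieSubmodule.Quotient.mk_eq_zero I).mp ((Submodule.mem_bot ℝ).mp h)
  have hX : X ∈ Jc.aSeries (t + 1) := by
    refine ⟨fun Y => hmk _ (hq.1 (LieSubmodule.Quotient.mk (N := I) Y)), fun Y => hmk _ ?_⟩
    change ⁅LieSubmodule.Quotient.mk (N := I) (Jc.J X), LieSubmodule.Quotient.mk (N := I) Y⁆ ∈ _
    rw [← hJt]
    exact hq.2 _
  rw [hstab, ← hI] at hX
  exact (LieSubmodule.Quotient.mk_eq_zero I).mpr hX

end ComplexStructure

theorem WnN_quotient_is_6dim_SnN_general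
    {g : Type*} [LieRing g] [LieAlgebra ℝ g]
    (h8 : Module.finrank ℝ g = 8) (hg : IsNilpotentLie g)
    (Jc : ComplexStructure g) (hw : Jc.IsWnN)
    (t : ℕ)
    (ht : Jc.aSeries t ≠ ⊥ ∧ Jc.aSeries t ≠ ⊤ ∧
      ∀ l : ℕ, 1 ≤ l → Jc.aSeries (t + l) = Jc.aSeries t)
    (I : LieIdeal ℝ g) (hI : I.toSubmodule = Jc.aSeries t)
    (Jt : ComplexStructure (g ⧸ I))
    (hJt : ∀ X : g, Jt.J (LieSubmodule.Quotient.mk (N := I) X)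
      = LieSubmodule.Quotient.mk (N := I) (Jc.J X)) :
    Module.finrank ℝ (g ⧸ I) = 6 ∧ IsNilpotentLie (g ⧸ I) ∧ Jt.IsSnN ∧
      Module.finrank ℝ (Jc.aSeries t) = 2 ∧ Jc.aSeries t = Jc.aSeries 1 := by
  obtain ⟨hbot, htop, hstab⟩ := ht
  have : FiniteDimensional ℝ g := Module.finite_of_finrank_eq_succ h8
  have hsum : finrank ℝ (g ⧸ I) + finrank ℝ (Jc.aSeries t) = 8 := by
    rw [← h8, ← hI]; exact Submodule.finrank_quotient_add_finrank I.toSubmodule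
  have hlt : finrank ℝ (Jc.aSeries t) < 8 := h8 ▸ Submodule.finrank_lt htop
  have : Nontrivial (g ⧸ I) := Module.nontrivial_of_finrank_pos (R := ℝ) (by omega)
  have hnil := isNilpotentLie_quotient hg I
  have hSnN : Jt.IsSnN := Jc.isSnN_quotient (hstab 1 le_rfl) I hI Jt hJt
  have hq : 4 < finrank ℝ (g ⧸ I) := by
    by_contra! h
    exact Jt.not_isSnN_of_finrank_le_four hnil h hSnN
  obtain ⟨m, hm⟩ := even_finrank_of_apply_apply_eq_neg Jt.J Jt.j_sq
  have ht2 := Jc.two_le_finrank_aSeries hbot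
  have ht1 : 1 ≤ t := Nat.one_le_iff_ne_zero.mpr (by rintro rfl; exact hbot rfl)
  have h1t : Jc.aSeries 1 = Jc.aSeries t :=
    Submodule.eq_of_le_of_finrank_le (Jc.aSeries_monotone ht1)
      (by have := Jc.two_le_finrank_aSeries hw.1; omega)
  exact ⟨by omega, hnil, hSnN, by omega, h1t.symm⟩

/-- Lemma 2.6: for a WnN complex structure on an 8-dimensional NLA, the quotient by the
stabilized term of the ascending compatible series is a 6-dimensional NLA with SnN complex
structure; in particular `dim a_t(J) = 2` and `a_t(J) = a₁(J)`. -/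
theorem WnN_quotient_is_6dim_SnN
    {g : Type*} [LieRing g] [LieAlgebra ℝ g]
    (h8 : Module.finrank ℝ g = 8) (hg : IsNilpotentLie g)
    (Jc : ComplexStructure g) (hw : Jc.IsWnN)
    (t : ℕ)
    (ht : Jc.aSeries t ≠ ⊥ ∧ Jc.aSeries t ≠ ⊤ ∧
      ∀ l : ℕ, 1 ≤ l → Jc.aSeries (t + l) = Jc.aSeries t)
    (htmin : ∀ s : ℕ, (Jc.aSeries s ≠ ⊥ ∧ Jc.aSeries s ≠ ⊤ ∧
      ∀ l : ℕ, 1 ≤ l → Jc.aSeries (s + l) = Jc.aSeries s) → t ≤ s)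
    (I : LieIdeal ℝ g) (hI : I.toSubmodule = Jc.aSeries t)
    (Jt : ComplexStructure (g ⧸ I))
    (hJt : ∀ X : g, Jt.J (LieSubmodule.Quotient.mk (N := I) X)
      = LieSubmodule.Quotient.mk (N := I) (Jc.J X)) :
    Module.finrank ℝ (g ⧸ I) = 6 ∧ IsNilpotentLie (g ⧸ I) ∧ Jt.IsSnN ∧
      Module.finrank ℝ (Jc.aSeries t) = 2 ∧ Jc.aSeries t = Jc.aSeries 1 :=
  WnN_quotient_is_6dim_SnN_general h8 hg Jc hw t ht I hI Jt hJt

end Paper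
end
end

section
/- Let (g,J) be an 8-dimensional nilpotent Lie algebra with weakly non-nilpotent complex structure admitting a (1,0)-basis with equations dη¹ = 0, dη² = η¹³ + η^{1 3̄}, dη³ = iε η^{1 1̄} + iδ η^{1 2̄} − iδ η^{2 1̄}, dη⁴ = A η¹² + B η^{1 1̄}, where ε ∈ {0,1}, δ = ±1, A,B ∈ ℂ (the case ν = 0). Then there is a (1,0)-basis {ω¹,…,ω⁴} in which the structure equations become dω¹ = 0, dω² = ω¹³ + ω^{1 3̄}, dω³ = iε ω^{1 1̄} + iδ ω^{1 2̄} − iδ ω^{2 1̄}, dω⁴ = a ω¹² + B' ω^{1 1̄}, with δ = ±1 and (ε, a, B') one of: (i) a = B' = 0 and ε ∈ {0,1}; (ii) a = 0, B' = 1 and ε ∈ {0,1}; (iii) a = 1, B' ∈ {0,1} and ε = 0; (iv) a = 1, B' ∈ [0,∞) and ε = 1. -/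
noncomputable section

open Complex Module
open scoped TensorProduct

namespace Paper

/-- Complex conjugate of a complex-valued form. -/
def cF {M : Type*} (α : M → ℂ) : M → ℂ := fun X => (starRingEnd ℂ) (α X)

/-- Wedge product of two 1-forms, as a 2-form. -/
def w2 {M R : Type*} [CommRing R] (α β : M → R) (X Y : M) : R := α X * β Y - α Y * β X

/-- Wedge product of three 1-forms, as a 3-form. -/
def w3 {M R : Type*} [CommRing R] (α β γ : M → R) (X Y Z : M) : R :=
  α X * w2 β γ Y Z - α Y * w2 β γ X Z + α Z * w2 β γ X Y

/-- Wedge product of four 1-forms, as a 4-form. -/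
def w4 {M R : Type*} [CommRing R] (α β γ η : M → R) (W X Y Z : M) : R :=
  α W * w3 β γ η X Y Z - α X * w3 β γ η W Y Z + α Y * w3 β γ η W X Z - α Z * w3 β γ η W X Y

/-- Chevalley–Eilenberg differential of a 1-form: `dα(X,Y) = -α([X,Y])`. -/
def dd {g R : Type*} [LieRing g] [CommRing R] (α : g → R) (X Y : g) : R := -α ⁅X, Y⁆

variable {g : Type*} [LieRing g] [LieAlgebra ℝ g]

/-- `ω` is a basis of (1,0)-forms for `(g,J)` (here `dim ℝ g = 8`): each `ω k` is of bidegree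
(1,0) for `J`, and the joint map `g → ℂ⁴` is bijective (so that `{ω^k, ω̄^k}` is a basis of the
complexified dual). -/
def Is10Basis (Jc : ComplexStructure g) (ω : Fin 4 → (g →ₗ[ℝ] ℂ)) : Prop :=
  (∀ (k : Fin 4) (X : g), ω k (Jc.J X) = Complex.I * ω k X) ∧
  Function.Bijective (fun (X : g) (k : Fin 4) => ω k X)

/-- The complex structure equations (★):
`dω¹ = 0`, `dω² = ω¹³ + ω^{1 3̄}`, `dω³ = iε ω^{1 1̄} + iδ ω^{1 2̄} − iδ ω^{2 1̄}`,
`dω⁴ = A ω¹² + B ω^{1 1̄} + ν (ω²³ + 2δε ω^{1 3̄} + ω^{2 3̄})`. -/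
def StarEq (ω : Fin 4 → (g →ₗ[ℝ] ℂ)) (ε δ ν : ℝ) (A B : ℂ) : Prop :=
  (∀ X Y : g, dd (⇑(ω 0)) X Y = 0) ∧
  (∀ X Y : g, dd (⇑(ω 1)) X Y = w2 (⇑(ω 0)) (⇑(ω 2)) X Y + w2 (⇑(ω 0)) (cF ⇑(ω 2)) X Y) ∧
  (∀ X Y : g, dd (⇑(ω 2)) X Y
      = Complex.I * (ε : ℂ) * w2 (⇑(ω 0)) (cF ⇑(ω 0)) X Y
        + Complex.I * (δ : ℂ) * w2 (⇑(ω 0)) (cF ⇑(ω 1)) X Y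
        - Complex.I * (δ : ℂ) * w2 (⇑(ω 1)) (cF ⇑(ω 0)) X Y) ∧
  (∀ X Y : g, dd (⇑(ω 3)) X Y
      = A * w2 (⇑(ω 0)) (⇑(ω 1)) X Y + B * w2 (⇑(ω 0)) (cF ⇑(ω 0)) X Y
        + (ν : ℂ) * (w2 (⇑(ω 1)) (⇑(ω 2)) X Y
            + 2 * (δ : ℂ) * (ε : ℂ) * w2 (⇑(ω 0)) (cF ⇑(ω 2)) X Y
            + w2 (⇑(ω 1)) (cF ⇑(ω 2)) X Y))

/-- The admissible range of the parameters `(ε,δ,ν,a,B)` in Theorem 3.1. -/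
def Admissible (ε δ ν a : ℝ) (B : ℂ) : Prop :=
  (ε = 0 ∨ ε = 1) ∧ (δ = 1 ∨ δ = -1) ∧
  ((ν = 0 ∧ a = 0 ∧ B = 0) ∨
   (ν = 0 ∧ a = 0 ∧ B = 1) ∨
   ((ν = 0 ∨ ν = 1) ∧ a = 1 - ν ∧ (∃ b : ℝ, 0 ≤ b ∧ B = (b : ℂ)) ∧
      (ε = 0 → (B = 0 ∨ B = 1))) ∨
   (ν = 1 ∧ 0 < a ∧ (ε = 0 → (a = 1 ∧ 0 ≤ B.im))))

/-- A pseudo-Kähler structure on `(g,J)`: a closed, `J`-invariant, nondegenerate 2-form. -/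
structure PseudoKahlerForm (Jc : ComplexStructure g) where
  F : g →ₗ[ℝ] g →ₗ[ℝ] ℝ
  antisymm : ∀ X Y : g, F X Y = -F Y X
  compat : ∀ X Y : g, F (Jc.J X) (Jc.J Y) = F X Y
  closed : ∀ X Y Z : g, F ⁅X, Y⁆ Z - F ⁅X, Z⁆ Y + F ⁅Y, Z⁆ X = 0
  nondeg : ∀ X : g, (∀ Y : g, F X Y = 0) → X = 0


/-!
Rescaling the basis to `ω = (l₁η¹, l₁rη², rη³, l₄η⁴)` with `|l₁| = 1` and `r` real (and `r = 1`
unless `ε = 0`) preserves the first three equations and turns `(A, B)` into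
`(l₄A / (l₁²r), l₄B)`. A suitable `l₄` kills one coefficient or normalises the other to `1`. When
both are nonzero, for `ε = 0` the phase `l₁²` and the modulus `r` make `A = B`, so both become `1`;
for `ε = 1` the phase alone makes `a = 1` and `B' = |B / A|`.
-/

theorem Is10Basis.smul {Jc : ComplexStructure g} {η : Fin 4 → (g →ₗ[ℝ] ℂ)}
    (hη : Is10Basis Jc η) {c : Fin 4 → ℂ} (hc : ∀ k, c k ≠ 0) :
    Is10Basis Jc (fun k => c k • η k) := by
  refine ⟨fun k X => ?_, ?_⟩
  · simp only [LinearMap.smul_apply, smul_eq_mul, hη.1 k X]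
    ring
  · exact (Equiv.piCongrRight fun k => (Units.mk0 (c k) (hc k)).mulLeft).bijective.comp hη.2

/-- `(A', B')` are the coefficients of `dω⁴` after the rescaling `ω = (l₁η¹, l₁rη², rη³, l₄η⁴)`
of a basis with coefficients `(A, B)`. -/
def IsStarRescaling (ε : ℝ) (A B A' B' : ℂ) : Prop :=
  ∃ (l₁ l₄ : ℂ) (r : ℝ), ‖l₁‖ = 1 ∧ r ≠ 0 ∧ l₄ ≠ 0 ∧ (ε = 0 ∨ r = 1) ∧
    A' * l₁ ^ 2 * r = l₄ * A ∧ B' = l₄ * B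

theorem StarEq.exists_of_isStarRescaling {Jc : ComplexStructure g}
    {η : Fin 4 → (g →ₗ[ℝ] ℂ)} {ε δ : ℝ} {A B A' B' : ℂ}
    (hη : Is10Basis Jc η) (heq : StarEq η ε δ 0 A B) (hresc : IsStarRescaling ε A B A' B') :
    ∃ ω : Fin 4 → (g →ₗ[ℝ] ℂ), Is10Basis Jc ω ∧ StarEq ω ε δ 0 A' B' := by
  obtain ⟨l₁, l₄, r, hl₁, hr, hl₄, hεr, hA, hB⟩ := hresc
  have hunit : l₁ * starRingEnd ℂ l₁ = 1 := by
    rw [Complex.mul_conj', hl₁]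
    norm_num
  have hl₁0 : l₁ ≠ 0 := by
    rintro rfl
    simp at hl₁
  have hr0 : (r : ℂ) ≠ 0 := Complex.ofReal_ne_zero.mpr hr
  have hεr : (ε : ℂ) * r = ε := by
    rcases hεr with rfl | rfl <;> simp
  obtain ⟨e₀, e₁, e₂, e₃⟩ := heq
  simp only [dd, w2, cF, Complex.ofReal_zero, zero_mul, add_zero] at e₀ e₁ e₂ e₃
  refine ⟨fun k => ![l₁, l₁ * r, (r : ℂ), l₄] k • η k, hη.smul fun k => ?_, ?_, ?_, ?_, ?_⟩
  · fin_cases k <;> simp [hl₁0, hr0, hl₄]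
  all_goals
    intro X Y
    simp only [dd, w2, cF, LinearMap.smul_apply, smul_eq_mul, map_mul, Complex.conj_ofReal,
      Complex.ofReal_zero, zero_mul, add_zero,
      Matrix.cons_val_zero, Matrix.cons_val_one, Matrix.cons_val_two, Matrix.cons_val_three,
      Matrix.head_cons, Matrix.tail_cons]
  · linear_combination l₁ * e₀ X Y
  · linear_combination (l₁ * r) * e₁ X Y
  · set W₀₀ := η 0 X * starRingEnd ℂ (η 0 Y) - η 0 Y * starRingEnd ℂ (η 0 X)
    set W₀₁ := η 0 X * starRingEnd ℂ (η 1 Y) - η 0 Y * starRingEnd ℂ (η 1 X)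
    set W₁₀ := η 1 X * starRingEnd ℂ (η 0 Y) - η 1 Y * starRingEnd ℂ (η 0 X)
    linear_combination (r : ℂ) * e₂ X Y
      - (Complex.I * ε * W₀₀ + Complex.I * δ * r * (W₀₁ - W₁₀)) * hunit
      + Complex.I * W₀₀ * hεr
  · linear_combination l₄ * e₃ X Y - (η 0 X * η 1 Y - η 0 Y * η 1 X) * hA
      - (η 0 X * starRingEnd ℂ (η 0 Y) - η 0 Y * starRingEnd ℂ (η 0 X)) * (B' * hunit + hB)

theorem isStarRescaling_mul {ε : ℝ} {A B l₄ : ℂ} (hl₄ : l₄ ≠ 0) :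
    IsStarRescaling ε A B (l₄ * A) (l₄ * B) :=
  ⟨1, l₄, 1, by simp, one_ne_zero, hl₄, Or.inr rfl, by simp, rfl⟩

theorem isStarRescaling_one_one {A B : ℂ} (hA : A ≠ 0) (hB : B ≠ 0) :
    IsStarRescaling 0 A B 1 1 := by
  set z := A / B
  refine ⟨Complex.exp ((z.arg / 2 : ℝ) * Complex.I), B⁻¹, ‖z‖, Complex.norm_exp_ofReal_mul_I _,
    by simp [z, hA, hB], inv_ne_zero hB, Or.inl rfl, ?_, (inv_mul_cancel₀ hB).symm⟩
  rw [one_mul, ← Complex.exp_nat_mul, mul_comm, ← mul_assoc]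
  push_cast
  rw [show (2 : ℂ) * (z.arg / 2) = z.arg by ring, Complex.norm_mul_exp_arg_mul_I]
  field_simp [z]
  exact div_mul_cancel₀ A hB

theorem isStarRescaling_one_norm_div {ε : ℝ} {A : ℂ} (B : ℂ) (hA : A ≠ 0) :
    IsStarRescaling ε A B 1 ‖B / A‖ := by
  set z := B / A
  set l₁ := Complex.exp ((-z.arg / 2 : ℝ) * Complex.I)
  have hl₁ : l₁ ^ 2 * z = ‖z‖ := by
    rw [← Complex.norm_mul_exp_arg_mul_I z, ← Complex.exp_nat_mul, mul_left_comm,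
      ← Complex.exp_add]
    push_cast
    ring_nf
    simp
  refine ⟨l₁, l₁ ^ 2 / A, 1, Complex.norm_exp_ofReal_mul_I _, one_ne_zero,
    div_ne_zero (pow_ne_zero 2 (Complex.exp_ne_zero _)) hA, Or.inr rfl, ?_, ?_⟩
  · field_simp
    simp
  · rw [← hl₁]
    ring

def IsStarNormalForm (ε a : ℝ) (B' : ℂ) : Prop :=
  (a = 0 ∧ B' = 0) ∨
  (a = 0 ∧ B' = 1) ∨
  (a = 1 ∧ (B' = 0 ∨ B' = 1) ∧ ε = 0) ∨
  (a = 1 ∧ (∃ b : ℝ, 0 ≤ b ∧ B' = (b : ℂ)) ∧ ε = 1)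

theorem exists_isStarRescaling_isStarNormalForm {ε : ℝ} (hε : ε = 0 ∨ ε = 1) (A B : ℂ) :
    ∃ (a : ℝ) (B' : ℂ), IsStarRescaling ε A B a B' ∧ IsStarNormalForm ε a B' := by
  rcases eq_or_ne A 0 with rfl | hA
  · rcases eq_or_ne B 0 with rfl | hB
    · refine ⟨0, 0, ?_, Or.inl ⟨rfl, rfl⟩⟩
      simpa using isStarRescaling_mul (ε := ε) (A := 0) (B := 0) one_ne_zero
    · refine ⟨0, 1, ?_, Or.inr <| Or.inl ⟨rfl, rfl⟩⟩
      simpa [hB] using isStarRescaling_mul (ε := ε) (A := 0) (B := B) (inv_ne_zero hB)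
  rcases hε with rfl | rfl
  · rcases eq_or_ne B 0 with rfl | hB
    · refine ⟨1, 0, ?_, Or.inr <| Or.inr <| Or.inl ⟨rfl, Or.inl rfl, rfl⟩⟩
      simpa [hA] using isStarRescaling_mul (ε := 0) (A := A) (B := 0) (inv_ne_zero hA)
    · refine ⟨1, 1, ?_, Or.inr <| Or.inr <| Or.inl ⟨rfl, Or.inr rfl, rfl⟩⟩
      simpa using isStarRescaling_one_one hA hB
  · refine ⟨1, ‖B / A‖, ?_, Or.inr <| Or.inr <| Or.inr ⟨rfl, ⟨_, norm_nonneg _, rfl⟩, rfl⟩⟩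
    simpa using isStarRescaling_one_norm_div B hA

theorem reduction_nu_zero_general
    {g : Type*} [LieRing g] [LieAlgebra ℝ g]
    (Jc : ComplexStructure g)
    (η : Fin 4 → (g →ₗ[ℝ] ℂ)) (ε δ : ℝ) (A B : ℂ)
    (hη : Is10Basis Jc η) (hε : ε = 0 ∨ ε = 1)
    (heq : StarEq η ε δ 0 A B) :
    ∃ (ω : Fin 4 → (g →ₗ[ℝ] ℂ)) (a : ℝ) (B' : ℂ),
      Is10Basis Jc ω ∧ StarEq ω ε δ 0 (a : ℂ) B' ∧
      ((a = 0 ∧ B' = 0) ∨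
       (a = 0 ∧ B' = 1) ∨
       (a = 1 ∧ (B' = 0 ∨ B' = 1) ∧ ε = 0) ∨
       (a = 1 ∧ (∃ b : ℝ, 0 ≤ b ∧ B' = (b : ℂ)) ∧ ε = 1)) := by
  obtain ⟨a, B', hresc, hnf⟩ := exists_isStarRescaling_isStarNormalForm hε A B
  obtain ⟨ω, hω, hstar⟩ := heq.exists_of_isStarRescaling hη hresc
  exact ⟨ω, a, B', hω, hstar, hnf⟩

/-- Proposition 3.3: reduction of the structure equations (3.3) in the case ν = 0. -/
theorem reduction_nu_zero
    {g : Type*} [LieRing g] [LieAlgebra ℝ g]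
    (h8 : Module.finrank ℝ g = 8) (hg : IsNilpotentLie g)
    (Jc : ComplexStructure g) (hw : Jc.IsWnN)
    (η : Fin 4 → (g →ₗ[ℝ] ℂ)) (ε δ : ℝ) (A B : ℂ)
    (hη : Is10Basis Jc η) (hε : ε = 0 ∨ ε = 1) (hδ : δ = 1 ∨ δ = -1)
    (heq : StarEq η ε δ 0 A B) :
    ∃ (ω : Fin 4 → (g →ₗ[ℝ] ℂ)) (a : ℝ) (B' : ℂ),
      Is10Basis Jc ω ∧ StarEq ω ε δ 0 (a : ℂ) B' ∧
      ((a = 0 ∧ B' = 0) ∨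
       (a = 0 ∧ B' = 1) ∨
       (a = 1 ∧ (B' = 0 ∨ B' = 1) ∧ ε = 0) ∨
       (a = 1 ∧ (∃ b : ℝ, 0 ≤ b ∧ B' = (b : ℂ)) ∧ ε = 1)) :=
  reduction_nu_zero_general Jc η ε δ A B hη hε heq

end Paper
end
end

section
/- Let (g,J) and (g',J') be 8-dimensional nilpotent Lie algebras with weakly non-nilpotent complex structures given by the equations (★) with admissible parameters (ε,δ,ν,a,B) and (ε',δ',ν',a',B'). Then J and J' are equivalent if and only if there is a ℂ-linear isomorphism F : g'^{1,0} → g^{1,0}, F(ω'^i) = Σ_j λ^i_j ω^j, with d ∘ F = F ∘ d, triangular as in the previous lemma, satisfying λ¹₁ = e^{iθ}, λ²₂ = λ e^{iθ}, λ³₃ = λ for some θ ∈ [0,2π) and λ ∈ ℝ∖{0}, together with ε(1−λ) = 0, Im(e^{iθ} · conj(λ²₁)) = 0 and λ e^{iθ} λ⁴₂ − ν λ²₁ λ⁴₄ = 0. Moreover, in that case the parameters are related by ε' = ε, δ' = δ, a' = a λ⁴₄ / ((λ¹₁)² λ³₃), B' = B λ⁴₄, and ν' = ν λ⁴₄ /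 (λ¹₁ (λ³₃)²). -/
noncomputable section

open Complex Module
open scoped TensorProduct

namespace Paper

variable {g : Type*} [LieRing g] [LieAlgebra ℝ g]

variable {g : Type*} [LieRing g] [LieAlgebra ℝ g] in
/-- The image forms `F(ω'^i) = Σ_j λ^i_j ω^j` of a ℂ-linear map `F : g'^{1,0} → g^{1,0}`
determined by the matrix `Λ`. -/
def Fof (ω : Fin 4 → (g →ₗ[ℝ] ℂ)) (Λ : Matrix (Fin 4) (Fin 4) ℂ) (i : Fin 4) : g → ℂ :=
  fun X => ∑ j : Fin 4, Λ i j * ω j X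

variable {g : Type*} [LieRing g] [LieAlgebra ℝ g] in
/-- The condition `d ∘ F = F ∘ d` for the map `F` determined by `Λ`, where the differentials
`dω'^i` on the source are given by the equations (★) with parameters `(ε',δ',ν',A',B')`. -/
def Intertwines (ω : Fin 4 → (g →ₗ[ℝ] ℂ)) (Λ : Matrix (Fin 4) (Fin 4) ℂ)
    (ε' δ' ν' : ℝ) (A' B' : ℂ) : Prop :=
  (∀ X Y : g, dd (Fof ω Λ 0) X Y = 0) ∧
  (∀ X Y : g, dd (Fof ω Λ 1) X Y
      = w2 (Fof ω Λ 0) (Fof ω Λ 2) X Y + w2 (Fof ω Λ 0) (cF (Fof ω Λ 2)) X Y) ∧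
  (∀ X Y : g, dd (Fof ω Λ 2) X Y
      = Complex.I * (ε' : ℂ) * w2 (Fof ω Λ 0) (cF (Fof ω Λ 0)) X Y
        + Complex.I * (δ' : ℂ) * w2 (Fof ω Λ 0) (cF (Fof ω Λ 1)) X Y
        - Complex.I * (δ' : ℂ) * w2 (Fof ω Λ 1) (cF (Fof ω Λ 0)) X Y) ∧
  (∀ X Y : g, dd (Fof ω Λ 3) X Y
      = A' * w2 (Fof ω Λ 0) (Fof ω Λ 1) X Y + B' * w2 (Fof ω Λ 0) (cF (Fof ω Λ 0)) X Y
        + (ν' : ℂ) * (w2 (Fof ω Λ 1) (Fof ω Λ 2) X Y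
            + 2 * (δ' : ℂ) * (ε' : ℂ) * w2 (Fof ω Λ 0) (cF (Fof ω Λ 2)) X Y
            + w2 (Fof ω Λ 1) (cF (Fof ω Λ 2)) X Y))

/-- The triangular pattern of the matrix `Λ` obtained in Lemma 3.7. -/
def TriangularPat (Λ : Matrix (Fin 4) (Fin 4) ℂ) : Prop :=
  Λ 0 1 = 0 ∧ Λ 0 2 = 0 ∧ Λ 0 3 = 0 ∧ Λ 1 2 = 0 ∧ Λ 1 3 = 0 ∧
  Λ 2 0 = 0 ∧ Λ 2 1 = 0 ∧ Λ 2 3 = 0 ∧ Λ 3 2 = 0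

/-!
An equivalence `f` pulls each `ω'^i` back to a (1,0)-form, i.e. to `Σ_j λ^i_j ω^j`, and `f`
preserves brackets iff this pull-back commutes with `d`; so equivalences are the same as invertible
intertwiners `Λ` (here `Λ i j` is the paper's `λ^{i+1}_{j+1}`).

`d F(ω'^i) = F(dω'^i)` is an identity of real 2-forms. Its component that is ℂ-linear in both
arguments and its component that is ℂ-linear in the first and antilinear in the second can be read
off by evaluating on `X, JX, Y, JY`; on a frame they become polynomial identities in the entries of
`Λ`. A dozen of them force the triangular shape. A few more give `λ²₂ = λ¹₁ λ³₃` with `λ³₃` real,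
`δ = δ' |λ¹₁|²`, `ε λ³₃ = ε'` and `Im (λ¹₁ conj λ²₁) = 0` (real and imaginary parts of one
identity), and the relations between `a, B, ν` and `a', B', ν'`. Since `δ, δ' = ±1` and
`ε, ε' ∈ {0, 1}`, this forces `|λ¹₁| = 1`, `δ' = δ` and `ε' = ε`.
-/

open ComplexConjugate Matrix

section StructureEquations

def starRHS {M : Type*} (α : Fin 4 → M → ℂ) (ε δ ν : ℝ) (A B : ℂ) : Fin 4 → M → M → ℂ :=
  ![0,
    w2 (α 0) (α 2) + w2 (α 0) (cF (α 2)),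
    (I * ε) • w2 (α 0) (cF (α 0)) + (I * δ) • w2 (α 0) (cF (α 1))
      - (I * δ) • w2 (α 1) (cF (α 0)),
    A • w2 (α 0) (α 1) + B • w2 (α 0) (cF (α 0))
      + (ν : ℂ) • (w2 (α 1) (α 2) + (2 * δ * ε : ℂ) • w2 (α 0) (cF (α 2)) + w2 (α 1) (cF (α 2)))]

theorem starRHS_comp {M N : Type*} (α : Fin 4 → N → ℂ) (f : M → N) (ε δ ν : ℝ) (A B : ℂ)
    (k : Fin 4) (X Y : M) :
    starRHS (fun l => α l ∘ f) ε δ ν A B k X Y = starRHS α ε δ ν A B k (f X) (f Y) := by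
  fin_cases k <;> rfl

variable {g : Type*} [LieRing g]

theorem forall_dd_eq_starRHS_iff (α : Fin 4 → g → ℂ) (ε δ ν : ℝ) (A B : ℂ) :
    (∀ k X Y, dd (α k) X Y = starRHS α ε δ ν A B k X Y) ↔
      (∀ X Y : g, dd (α 0) X Y = 0) ∧
      (∀ X Y : g, dd (α 1) X Y = w2 (α 0) (α 2) X Y + w2 (α 0) (cF (α 2)) X Y) ∧
      (∀ X Y : g, dd (α 2) X Y
          = I * (ε : ℂ) * w2 (α 0) (cF (α 0)) X Y + I * (δ : ℂ) * w2 (α 0) (cF (α 1)) X Y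
            - I * (δ : ℂ) * w2 (α 1) (cF (α 0)) X Y) ∧
      (∀ X Y : g, dd (α 3) X Y
          = A * w2 (α 0) (α 1) X Y + B * w2 (α 0) (cF (α 0)) X Y
            + (ν : ℂ) * (w2 (α 1) (α 2) X Y + 2 * (δ : ℂ) * (ε : ℂ) * w2 (α 0) (cF (α 2)) X Y
              + w2 (α 1) (cF (α 2)) X Y)) := by
  simp only [Fin.forall_fin_succ, IsEmpty.forall_iff, and_true]
  simp [starRHS, mul_assoc, mul_add]

variable [LieAlgebra ℝ g]

theorem starEq_iff {ω : Fin 4 → (g →ₗ[ℝ] ℂ)} {ε δ ν : ℝ} {A B : ℂ} :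
    StarEq ω ε δ ν A B ↔ ∀ k X Y, dd (ω k) X Y = starRHS (fun k => ω k) ε δ ν A B k X Y :=
  (forall_dd_eq_starRHS_iff (fun k => ω k) ε δ ν A B).symm

theorem intertwines_iff {ω : Fin 4 → (g →ₗ[ℝ] ℂ)} {Λ : Matrix (Fin 4) (Fin 4) ℂ}
    {ε δ ν : ℝ} {A B : ℂ} :
    Intertwines ω Λ ε δ ν A B ↔ ∀ k X Y, dd (Fof ω Λ k) X Y = starRHS (Fof ω Λ) ε δ ν A B k X Y :=
  (forall_dd_eq_starRHS_iff (Fof ω Λ) ε δ ν A B).symm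

end StructureEquations

section Coefficients

variable {M : Type*} (J : M → M)

def IsType10 (α : M → ℂ) : Prop :=
  ∀ X, α (J X) = I * α X

/-- The component of a real 2-form `Φ` that is ℂ-linear in both arguments, evaluated at `(X, Y)`;
`coeff11` is the component that is ℂ-linear in the first argument and antilinear in the second. -/
def coeff20 (X Y : M) : (M → M → ℂ) →ₗ[ℂ] ℂ where
  toFun Φ := (Φ X Y - I * Φ X (J Y) - I * Φ (J X) Y - Φ (J X) (J Y)) / 4
  map_add' Φ Ψ := by simp only [Pi.add_apply]; ring
  map_smul' c Φ := by simp only [Pi.smul_apply, smul_eq_mul, RingHom.id_apply]; ring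

def coeff11 (X Y : M) : (M → M → ℂ) →ₗ[ℂ] ℂ where
  toFun Φ := (Φ X Y + I * Φ X (J Y) - I * Φ (J X) Y + Φ (J X) (J Y)) / 4
  map_add' Φ Ψ := by simp only [Pi.add_apply]; ring
  map_smul' c Φ := by simp only [Pi.smul_apply, smul_eq_mul, RingHom.id_apply]; ring

variable {J} {α β : M → ℂ} (hα : IsType10 J α) (hβ : IsType10 J β) (X Y : M)
include hα hβ

theorem coeff20_w2 : coeff20 J X Y (w2 α β) = α X * β Y - α Y * β X := by
  simp only [coeff20, LinearMap.coe_mk, AddHom.coe_mk, w2, hα _, hβ _]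
  ring_nf; simp only [I_sq]; ring

theorem coeff20_w2_cF : coeff20 J X Y (w2 α (cF β)) = 0 := by
  simp only [coeff20, LinearMap.coe_mk, AddHom.coe_mk, w2, cF, hα _, hβ _, map_mul, conj_I]
  ring_nf; simp only [I_sq]; ring

theorem coeff11_w2 : coeff11 J X Y (w2 α β) = 0 := by
  simp only [coeff11, LinearMap.coe_mk, AddHom.coe_mk, w2, hα _, hβ _]
  ring_nf; simp only [I_sq]; ring

theorem coeff11_w2_cF : coeff11 J X Y (w2 α (cF β)) = α X * conj (β Y) := by
  simp only [coeff11, LinearMap.coe_mk, AddHom.coe_mk, w2, cF, hα _, hβ _, map_mul, conj_I]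
  ring_nf; simp only [I_sq]; ring

end Coefficients

section StructureConstants

/-- The two components of the right-hand sides of (★) on vectors on which the forms take the
values `u` and `v`. -/
def starCoeff20 (ν : ℝ) (A : ℂ) (u v : Fin 4 → ℂ) : Fin 4 → ℂ :=
  ![0, u 0 * v 2 - u 2 * v 0, 0, A * (u 0 * v 1 - u 1 * v 0) + ν * (u 1 * v 2 - u 2 * v 1)]

def starCoeff11 (ε δ ν : ℝ) (B : ℂ) (u v : Fin 4 → ℂ) : Fin 4 → ℂ :=
  ![0, u 0 * conj (v 2),
    I * ε * (u 0 * conj (v 0)) + I * δ * (u 0 * conj (v 1)) - I * δ * (u 1 * conj (v 0)),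
    B * (u 0 * conj (v 0)) + ν * (2 * δ * ε * (u 0 * conj (v 2)) + u 1 * conj (v 2))]

variable {M : Type*} {J : M → M} {α : Fin 4 → M → ℂ} (hα : ∀ l, IsType10 J (α l))
  (ε δ ν : ℝ) (A B : ℂ) (X Y : M) (i : Fin 4)
include hα

theorem coeff20_starRHS :
    coeff20 J X Y (starRHS α ε δ ν A B i)
      = starCoeff20 ν A (fun l => α l X) (fun l => α l Y) i := by
  fin_cases i <;>
    simp [starRHS, starCoeff20, coeff20_w2 (hα _) (hα _), coeff20_w2_cF (hα _) (hα _)] <;> ring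

theorem coeff11_starRHS :
    coeff11 J X Y (starRHS α ε δ ν A B i)
      = starCoeff11 ε δ ν B (fun l => α l X) (fun l => α l Y) i := by
  fin_cases i <;>
    simp [starRHS, starCoeff11, coeff11_w2 (hα _) (hα _), coeff11_w2_cF (hα _) (hα _), mul_add]

end StructureConstants

/-- `d ∘ F = F ∘ d` in coordinates: `Λ` carries the components of (★) with parameters
`(ε, δ, ν, A, B)` to those with parameters `(ε', δ', ν', A', B')`. -/
structure IntertwinesCoeffs (Λ : Matrix (Fin 4) (Fin 4) ℂ) (ε δ ν : ℝ) (A B : ℂ)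
    (ε' δ' ν' : ℝ) (A' B' : ℂ) : Prop where
  coeff20 : ∀ u v, Λ *ᵥ starCoeff20 ν A u v = starCoeff20 ν' A' (Λ *ᵥ u) (Λ *ᵥ v)
  coeff11 : ∀ u v, Λ *ᵥ starCoeff11 ε δ ν B u v = starCoeff11 ε' δ' ν' B' (Λ *ᵥ u) (Λ *ᵥ v)

section Intertwiners

variable {g : Type*} [LieRing g] [LieAlgebra ℝ g] {ω : Fin 4 → (g →ₗ[ℝ] ℂ)}
  {Λ : Matrix (Fin 4) (Fin 4) ℂ}

theorem Fof_apply (i : Fin 4) (X : g) : Fof ω Λ i X = (Λ *ᵥ fun k => ω k X) i := rfl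

theorem isType10_Fof {J : g → g} (hω : ∀ k, IsType10 J (ω k)) (i : Fin 4) :
    IsType10 J (Fof ω Λ i) := by
  intro X
  simp only [Fof, hω _ X, Finset.mul_sum]
  exact Finset.sum_congr rfl fun _ _ => by ring

theorem dd_Fof (i : Fin 4) (X Y : g) : dd (Fof ω Λ i) X Y = ∑ l, Λ i l * dd (ω l) X Y := by
  simp [dd, Fof]

theorem intertwinesCoeffs_of_intertwines {Jc : ComplexStructure g} {ε δ ν : ℝ} {A B : ℂ}
    {ε' δ' ν' : ℝ} {A' B' : ℂ} (hωb : Is10Basis Jc ω) (hse : StarEq ω ε δ ν A B)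
    (hI : Intertwines ω Λ ε' δ' ν' A' B') : IntertwinesCoeffs Λ ε δ ν A B ε' δ' ν' A' B' := by
  have hpull : ∀ i, ∑ l, Λ i l • starRHS (fun k => ω k) ε δ ν A B l
      = starRHS (Fof ω Λ) ε' δ' ν' A' B' i := by
    intro i
    ext X Y
    simp only [Finset.sum_apply, Pi.smul_apply, smul_eq_mul, ← intertwines_iff.1 hI, dd_Fof,
      starEq_iff.1 hse]
  have h10 := isType10_Fof (Λ := Λ) hωb.1
  constructor <;> intro u v <;> ext i <;>
    obtain ⟨X, rfl⟩ := hωb.2.2 u <;> obtain ⟨Y, rfl⟩ := hωb.2.2 v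
  · have h := congrArg (coeff20 Jc.J X Y) (hpull i)
    simp only [map_sum, map_smul, smul_eq_mul, coeff20_starRHS hωb.1, coeff20_starRHS h10,
      Fof_apply] at h
    exact h
  · have h := congrArg (coeff11 Jc.J X Y) (hpull i)
    simp only [map_sum, map_smul, smul_eq_mul, coeff11_starRHS hωb.1, coeff11_starRHS h10,
      Fof_apply] at h
    exact h

end Intertwiners

section TriangularPat

variable {Λ : Matrix (Fin 4) (Fin 4) ℂ} (hT : TriangularPat Λ)
include hT

theorem det_eq_of_triangularPat : Λ.det = Λ 0 0 * Λ 1 1 * Λ 2 2 * Λ 3 3 := by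
  unfold TriangularPat at hT
  rw [det_succ_row_zero, Fin.sum_univ_four, det_fin_three]
  simp [hT, mul_assoc]

variable (hdet : Λ.det ≠ 0)
include hdet

theorem entry00_ne_zero_of_triangularPat : Λ 0 0 ≠ 0 := by
  rw [det_eq_of_triangularPat hT] at hdet
  exact left_ne_zero_of_mul (left_ne_zero_of_mul (left_ne_zero_of_mul hdet))

theorem entry22_ne_zero_of_triangularPat : Λ 2 2 ≠ 0 := by
  rw [det_eq_of_triangularPat hT] at hdet
  exact right_ne_zero_of_mul (left_ne_zero_of_mul hdet)

end TriangularPat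

namespace IntertwinesCoeffs

variable {Λ : Matrix (Fin 4) (Fin 4) ℂ} {ε δ ν : ℝ} {A B : ℂ} {ε' δ' ν' : ℝ} {A' B' : ℂ}
  (h : IntertwinesCoeffs Λ ε δ ν A B ε' δ' ν' A' B')
include h

theorem coeff20_single (i j k : Fin 4) :
    ∑ l, Λ i l * starCoeff20 ν A (Pi.single j 1) (Pi.single k 1) l
      = starCoeff20 ν' A' (Λ.col j) (Λ.col k) i := by
  have hi := congrFun (h.coeff20 (Pi.single j 1) (Pi.single k 1)) i
  rwa [mulVec_single_one, mulVec_single_one] at hi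

theorem coeff11_single (i j k : Fin 4) :
    ∑ l, Λ i l * starCoeff11 ε δ ν B (Pi.single j 1) (Pi.single k 1) l
      = starCoeff11 ε' δ' ν' B' (Λ.col j) (Λ.col k) i := by
  have hi := congrFun (h.coeff11 (Pi.single j 1) (Pi.single k 1)) i
  rwa [mulVec_single_one, mulVec_single_one] at hi

theorem triangularPat (hdet : Λ.det ≠ 0) (hδ : δ ≠ 0) (hδ' : δ' ≠ 0) : TriangularPat Λ := by
  have e20 := h.coeff20_single
  have e11 := h.coeff11_single
  simp only [starCoeff20, starCoeff11, Fin.sum_univ_four, col_apply] at e20 e11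
  have row_ne_zero : ∀ i, ¬ ∀ j, Λ i j = 0 := fun i hi =>
    hdet (det_eq_zero_of_row_eq_zero i hi)
  have h01 : Λ 0 1 = 0 := by simpa using e20 0 0 2
  have h02 : Λ 0 2 = 0 := by simpa [hδ] using e11 0 0 1
  have h03 : Λ 0 3 = 0 := by
    by_contra h03
    refine row_ne_zero 2 fun k => ?_
    fin_cases k <;> simpa [h03] using e11 1 3 _
  have h00 : Λ 0 0 ≠ 0 := fun h00 => row_ne_zero 0 fun k => by
    fin_cases k <;> assumption
  have h21 : Λ 2 1 = 0 := by simpa using e20 2 0 2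
  have h12 : Λ 1 2 = 0 := by simpa [h02, hδ', h00] using e11 2 2 0
  have h13 : Λ 1 3 = 0 := by simpa [h03, hδ', h00] using e11 2 3 0
  have h23 : Λ 2 3 = 0 := by simpa [h03, h00] using e20 1 0 3
  have h20 : Λ 2 0 = 0 := by simpa [h12, h13, h00] using e11 1 0 0
  have h32 : Λ 3 2 = 0 := by simpa [h01, h21, hδ] using e11 3 0 1
  exact ⟨h01, h02, h03, h12, h13, h20, h21, h23, h32⟩

section Triangular

variable (hT : TriangularPat Λ)
include hT

theorem entry11_eq : Λ 1 1 = Λ 0 0 * Λ 2 2 := by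
  unfold TriangularPat at hT
  simpa [starCoeff20, Fin.sum_univ_four, hT] using h.coeff20_single 1 0 2

variable (hdet : Λ.det ≠ 0)
include hdet

theorem conj_entry22 : conj (Λ 2 2) = Λ 2 2 := by
  unfold TriangularPat at hT
  have hb : Λ 1 1 = Λ 0 0 * conj (Λ 2 2) := by
    simpa [starCoeff11, Fin.sum_univ_four, hT] using h.coeff11_single 1 0 2
  exact mul_left_cancel₀ (entry00_ne_zero_of_triangularPat hT hdet)
    (hb.symm.trans (h.entry11_eq hT))

theorem delta_eq (hδ : δ = 1 ∨ δ = -1) (hδ' : δ' = 1 ∨ δ' = -1) :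
    δ' = δ ∧ Λ 0 0 * conj (Λ 0 0) = 1 := by
  unfold TriangularPat at hT
  have hc : Λ 2 2 * (I * δ) = I * δ' * (Λ 0 0 * conj (Λ 1 1)) := by
    simpa [starCoeff11, Fin.sum_univ_four, hT] using h.coeff11_single 2 0 1
  have hconj : conj (Λ 1 1) = conj (Λ 0 0) * Λ 2 2 := by
    rw [h.entry11_eq hT, map_mul, h.conj_entry22 hT hdet]
  have hn : (δ : ℂ) = δ' * (Λ 0 0 * conj (Λ 0 0)) := by
    apply mul_left_cancel₀ (mul_ne_zero I_ne_zero (entry22_ne_zero_of_triangularPat hT hdet))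
    linear_combination hc + I * δ' * Λ 0 0 * hconj
  rw [mul_conj] at hn ⊢
  have hr : δ = δ' * normSq (Λ 0 0) := by exact_mod_cast hn
  have hn1 : normSq (Λ 0 0) = 1 := by
    rcases hδ with rfl | rfl <;> rcases hδ' with rfl | rfl <;>
      linarith [normSq_nonneg (Λ 0 0)]
  refine ⟨?_, by rw [hn1]; simp⟩
  rw [hr, hn1, mul_one]

theorem entry22_eq_re : Λ 2 2 = ((Λ 2 2).re : ℂ) :=
  (conj_eq_iff_re.mp (h.conj_entry22 hT hdet)).symm

theorem re_entry22_ne_zero : (Λ 2 2).re ≠ 0 := fun h0 =>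
  entry22_ne_zero_of_triangularPat hT hdet (by rw [h.entry22_eq_re hT hdet, h0, ofReal_zero])

variable (hδ : δ = 1 ∨ δ = -1) (hδ' : δ' = 1 ∨ δ' = -1)
include hδ hδ'

theorem epsilon_eq (hε : ε = 0 ∨ ε = 1) (hε' : ε' = 0 ∨ ε' = 1) :
    ε' = ε ∧ ε * (1 - (Λ 2 2).re) = 0 ∧ (Λ 0 0 * conj (Λ 1 0)).im = 0 := by
  obtain ⟨rfl, hn⟩ := h.delta_eq hT hdet hδ hδ'
  unfold TriangularPat at hT
  have he : Λ 2 2 * (I * ε) = I * ε' * (Λ 0 0 * conj (Λ 0 0))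
      + I * δ' * (Λ 0 0 * conj (Λ 1 0)) - I * δ' * (Λ 1 0 * conj (Λ 0 0)) := by
    simpa [starCoeff11, Fin.sum_univ_four, hT] using h.coeff11_single 2 0 0
  have key : I * (ε * (Λ 2 2).re : ℝ) = I * ε' + I * δ' * (Λ 0 0 * conj (Λ 1 0)
      - conj (Λ 0 0 * conj (Λ 1 0))) := by
    rw [map_mul, conj_conj, ofReal_mul, ← h.entry22_eq_re hT hdet]
    linear_combination he + I * ε' * hn
  rw [sub_conj] at key
  generalize Λ 0 0 * conj (Λ 1 0) = w at key ⊢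
  have hlam := h.re_entry22_ne_zero hT hdet
  have hre := congrArg re key
  have him := congrArg im key
  simp only [mul_im, mul_re, I_re, I_im, ofReal_re, ofReal_im, add_re, add_im, mul_zero, zero_mul,
    mul_one, one_mul, zero_sub, add_zero, zero_add, sub_self] at hre him
  refine ⟨?_, ?_, by rcases hδ with rfl | rfl <;> linarith⟩ <;>
    rcases hε with rfl | rfl <;> rcases hε' with rfl | rfl <;> simp_all

theorem params_eq :
    A' = A * Λ 3 3 / (Λ 0 0 ^ 2 * Λ 2 2) ∧ B' = B * Λ 3 3 ∧
      (ν' : ℂ) = ν * Λ 3 3 / (Λ 0 0 * Λ 2 2 ^ 2) := by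
  have h00 := entry00_ne_zero_of_triangularPat hT hdet
  have h22 := entry22_ne_zero_of_triangularPat hT hdet
  have h11 := h.entry11_eq hT
  have hn := (h.delta_eq hT hdet hδ hδ').2
  unfold TriangularPat at hT
  have hf : Λ 3 3 * A = A' * (Λ 0 0 * Λ 1 1) := by
    simpa [starCoeff20, Fin.sum_univ_four, hT] using h.coeff20_single 3 0 1
  have hg : Λ 3 3 * ν = ν' * (Λ 1 1 * Λ 2 2) := by
    simpa [starCoeff20, Fin.sum_univ_four, hT] using h.coeff20_single 3 1 2
  have hh : Λ 3 3 * B = B' * (Λ 0 0 * conj (Λ 0 0)) := by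
    simpa [starCoeff11, Fin.sum_univ_four, hT] using h.coeff11_single 3 0 0
  refine ⟨?_, ?_, ?_⟩
  · rw [eq_div_iff (mul_ne_zero (pow_ne_zero 2 h00) h22)]
    linear_combination -hf - A' * Λ 0 0 * h11
  · linear_combination -hh - B' * hn
  · rw [eq_div_iff (mul_ne_zero h00 (pow_ne_zero 2 h22))]
    linear_combination -hg - ν' * Λ 2 2 * h11

theorem entry31_eq (hε : ε = 0 ∨ ε = 1) (hε' : ε' = 0 ∨ ε' = 1) :
    Λ 1 1 * Λ 3 1 - ν * Λ 1 0 * Λ 3 3 = 0 := by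
  obtain ⟨rfl, -⟩ := h.delta_eq hT hdet hδ hδ'
  obtain ⟨rfl, hε1, -⟩ := h.epsilon_eq hT hdet hδ hδ' hε hε'
  have h11 := h.entry11_eq hT
  have hlam := h.entry22_eq_re hT hdet
  have h22 := h.conj_entry22 hT hdet
  unfold TriangularPat at hT
  have hg : Λ 3 3 * ν = ν' * (Λ 1 1 * Λ 2 2) := by
    simpa [starCoeff20, Fin.sum_univ_four, hT] using h.coeff20_single 3 1 2
  have hi : Λ 3 1 + Λ 3 3 * (ν * (2 * δ' * ε'))
      = ν' * (2 * δ' * ε' * (Λ 0 0 * Λ 2 2) + Λ 1 0 * Λ 2 2) := by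
    simpa [starCoeff11, Fin.sum_univ_four, hT, h22] using h.coeff11_single 3 0 2
  have hε1' : (ε' : ℂ) * (1 - Λ 2 2) = 0 := by rw [hlam]; exact_mod_cast hε1
  linear_combination Λ 1 1 * hi - (2 * δ' * ε' * Λ 0 0 + Λ 1 0) * hg
    + 2 * δ' * ν * Λ 3 3 * Λ 0 0 * hε1' - 2 * δ' * ε' * ν * Λ 3 3 * h11

end Triangular

end IntertwinesCoeffs

theorem apply_eq_sum_of_isType10 {ι : Type*} [Fintype ι] [DecidableEq ι]
    (φ : (ι → ℂ) →ₗ[ℝ] ℂ) (hφ : IsType10 (I • ·) φ) (v : ι → ℂ) :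
    φ v = ∑ j, φ (Pi.single j 1) * v j := by
  let φℂ : (ι → ℂ) →ₗ[ℂ] ℂ :=
    { toFun := φ
      map_add' := φ.map_add
      map_smul' := fun c v => by
        conv_lhs => rw [← re_add_im c, add_smul, mul_comm, mul_smul]
        rw [map_add, hφ, Complex.coe_smul, Complex.coe_smul, map_smul, map_smul,
          RingHom.id_apply, smul_eq_mul, real_smul, real_smul]
        conv_rhs => rw [← re_add_im c]
        ring }
  have hsingle : ∀ j : ι, (fun k => if j = k then (1 : ℂ) else 0) = Pi.single j 1 := fun j => by
    funext k; simp [Pi.single_apply, eq_comm]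
  have h := φℂ.pi_apply_eq_sum_univ v
  simp only [smul_eq_mul, hsingle, mul_comm (v _)] at h
  exact h

section Equivalence

variable {g g' : Type*} [LieRing g] [LieAlgebra ℝ g] [LieRing g'] [LieAlgebra ℝ g']
  {ω : Fin 4 → (g →ₗ[ℝ] ℂ)} {ω' : Fin 4 → (g' →ₗ[ℝ] ℂ)} {Λ : Matrix (Fin 4) (Fin 4) ℂ}
  {ε' δ' ν' : ℝ} {A' B' : ℂ}

theorem map_lie_iff_intertwines (hinj : Function.Injective fun X k => ω' k X)
    (hse' : StarEq ω' ε' δ' ν' A' B') (f : g → g') (hf : ∀ i X, ω' i (f X) = Fof ω Λ i X) :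
    (∀ X Y, f ⁅X, Y⁆ = ⁅f X, f Y⁆) ↔ Intertwines ω Λ ε' δ' ν' A' B' := by
  have hFof : Fof ω Λ = fun i => ω' i ∘ f := funext fun i => funext fun X => (hf i X).symm
  rw [intertwines_iff, hFof]
  simp only [starRHS_comp, ← starEq_iff.1 hse', dd, Function.comp_apply, neg_inj]
  exact ⟨fun h k X Y => by rw [h], fun h X Y => hinj (funext fun k => h k X Y)⟩

variable {Jc : ComplexStructure g} {Jc' : ComplexStructure g'}

def coordEquiv (hωb : Is10Basis Jc ω) : g ≃ₗ[ℝ] (Fin 4 → ℂ) :=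
  LinearEquiv.ofBijective (LinearMap.pi ω) hωb.2

theorem coordEquiv_apply (hωb : Is10Basis Jc ω) (X : g) (k : Fin 4) :
    coordEquiv hωb X k = ω k X := rfl

theorem coordEquiv_J (hωb : Is10Basis Jc ω) (X : g) :
    coordEquiv hωb (Jc.J X) = I • coordEquiv hωb X :=
  funext fun k => hωb.1 k X

variable (hωb : Is10Basis Jc ω) (hωb' : Is10Basis Jc' ω') (hse' : StarEq ω' ε' δ' ν' A' B')
include hωb hωb' hse'

theorem equiv_of_intertwines (hdet : Λ.det ≠ 0) (hI : Intertwines ω Λ ε' δ' ν' A' B') :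
    Jc.Equiv Jc' := by
  let L : (Fin 4 → ℂ) ≃ₗ[ℝ] (Fin 4 → ℂ) :=
    (Λ.toLinearEquiv' (Λ.invertibleOfIsUnitDet (isUnit_iff_ne_zero.2 hdet))).restrictScalars ℝ
  let F : g ≃ₗ[ℝ] g' := (coordEquiv hωb).trans (L.trans (coordEquiv hωb').symm)
  have hF : ∀ i X, ω' i (F X) = Fof ω Λ i X := fun i X => by
    rw [← coordEquiv_apply hωb', Fof_apply]
    exact congrFun ((coordEquiv hωb').apply_symm_apply _) i
  have hlie := (map_lie_iff_intertwines hωb'.2.1 hse' F hF).2 hI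
  refine ⟨{ F with map_lie' := hlie _ _ }, fun X => hωb'.2.1 (funext fun k => ?_)⟩
  show ω' k (F (Jc.J X)) = ω' k (Jc'.J (F X))
  rw [hωb'.1, hF, hF, isType10_Fof hωb.1]

theorem exists_intertwines_of_equiv (h : Jc.Equiv Jc') :
    ∃ Λ : Matrix (Fin 4) (Fin 4) ℂ, Λ.det ≠ 0 ∧ Intertwines ω Λ ε' δ' ν' A' B' := by
  obtain ⟨f, hfJ⟩ := h
  let E := coordEquiv hωb
  let Λ : Matrix (Fin 4) (Fin 4) ℂ := Matrix.of fun i j => ω' i (f (E.symm (Pi.single j 1)))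
  have hf : ∀ i X, ω' i (f X) = Fof ω Λ i X := by
    intro i X
    let φ : (Fin 4 → ℂ) →ₗ[ℝ] ℂ := (ω' i).comp (f.toLinearMap.comp E.symm.toLinearMap)
    have hφ : IsType10 (I • ·) φ := by
      intro v
      have hv : E.symm (I • v) = Jc.J (E.symm v) :=
        E.injective (by
          rw [LinearEquiv.apply_symm_apply, coordEquiv_J, LinearEquiv.apply_symm_apply])
      simp [φ, hv, hfJ, hωb'.1]
    have := apply_eq_sum_of_isType10 φ hφ (E X)
    simpa [φ, Fof, E, Λ, coordEquiv_apply, mul_comm] using this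
  refine ⟨Λ, fun h0 => ?_, (map_lie_iff_intertwines hωb'.2.1 hse' f hf).1 fun X Y => f.map_lie X Y⟩
  obtain ⟨v, hv0, hv⟩ := exists_mulVec_eq_zero_iff.2 h0
  have hfv : f (E.symm v) = 0 := hωb'.2.1 <| funext fun i => by
    simp only [hf, Fof_apply, ← coordEquiv_apply hωb, map_zero]
    rw [LinearEquiv.apply_symm_apply, hv]
    rfl
  exact hv0 (by simpa using hfv)

end Equivalence

theorem exists_exp_mul_I_eq {z : ℂ} (hz : z * conj z = 1) :
    ∃ θ : ℝ, 0 ≤ θ ∧ θ < 2 * Real.pi ∧ exp (θ * I) = z := by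
  have hnorm : ‖z‖ = 1 := by
    rw [mul_conj'] at hz
    exact (pow_eq_one_iff_of_nonneg (norm_nonneg z) two_ne_zero).1 (by exact_mod_cast hz)
  obtain ⟨hθ0, hθ⟩ := toIcoMod_mem_Ico' Real.two_pi_pos (arg z)
  refine ⟨_, hθ0, by simpa using hθ, ?_⟩
  calc exp (toIcoMod Real.two_pi_pos 0 (arg z) * I)
      = exp ((arg z - toIcoDiv Real.two_pi_pos 0 (arg z) • (2 * Real.pi : ℂ)) * I) := by
        rw [← self_sub_toIcoDiv_zsmul]; push_cast; rfl
    _ = exp (arg z * I) := exp_mul_I_periodic.sub_zsmul_eq _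
    _ = z := by simpa [hnorm] using norm_mul_exp_arg_mul_I z

theorem equivalence_iff_normalized_intertwiner_general
    {g g' : Type*} [LieRing g] [LieAlgebra ℝ g] [LieRing g'] [LieAlgebra ℝ g']
    (Jc : ComplexStructure g)
    (Jc' : ComplexStructure g')
    (ω : Fin 4 → (g →ₗ[ℝ] ℂ)) (ε δ ν a : ℝ) (B : ℂ)
    (hωb : Is10Basis Jc ω) (had : Admissible ε δ ν a B) (hse : StarEq ω ε δ ν (a : ℂ) B)
    (ω' : Fin 4 → (g' →ₗ[ℝ] ℂ)) (ε' δ' ν' a' : ℝ) (B' : ℂ)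
    (hωb' : Is10Basis Jc' ω') (had' : Admissible ε' δ' ν' a' B')
    (hse' : StarEq ω' ε' δ' ν' (a' : ℂ) B') :
    (Jc.Equiv Jc' ↔
      ∃ Λ : Matrix (Fin 4) (Fin 4) ℂ, Λ.det ≠ 0 ∧
        Intertwines ω Λ ε' δ' ν' (a' : ℂ) B' ∧ TriangularPat Λ ∧
        ∃ (θ lam : ℝ), 0 ≤ θ ∧ θ < 2 * Real.pi ∧ lam ≠ 0 ∧
          Λ 0 0 = Complex.exp ((θ : ℂ) * Complex.I) ∧
          Λ 1 1 = (lam : ℂ) * Complex.exp ((θ : ℂ) * Complex.I) ∧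
          Λ 2 2 = (lam : ℂ) ∧
          ε * (1 - lam) = 0 ∧
          (Complex.exp ((θ : ℂ) * Complex.I) * (starRingEnd ℂ) (Λ 1 0)).im = 0 ∧
          (lam : ℂ) * Complex.exp ((θ : ℂ) * Complex.I) * Λ 3 1
            - (ν : ℂ) * Λ 1 0 * Λ 3 3 = 0) ∧
    (∀ Λ : Matrix (Fin 4) (Fin 4) ℂ, Λ.det ≠ 0 →
      Intertwines ω Λ ε' δ' ν' (a' : ℂ) B' → TriangularPat Λ →
        ε' = ε ∧ δ' = δ ∧
        (a' : ℂ) = (a : ℂ) * Λ 3 3 / ((Λ 0 0) ^ 2 * Λ 2 2) ∧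
        B' = B * Λ 3 3 ∧
        (ν' : ℂ) = (ν : ℂ) * Λ 3 3 / (Λ 0 0 * (Λ 2 2) ^ 2)) := by
  obtain ⟨hε, hδ, -⟩ := had
  obtain ⟨hε', hδ', -⟩ := had'
  refine ⟨⟨fun hequiv => ?_, fun ⟨Λ, hdet, hI, _⟩ => equiv_of_intertwines hωb hωb' hse' hdet hI⟩,
    fun Λ hdet hI hT => ?_⟩
  · obtain ⟨Λ, hdet, hI⟩ := exists_intertwines_of_equiv hωb hωb' hse' hequiv
    have h := intertwinesCoeffs_of_intertwines hωb hse hI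
    have hT := h.triangularPat hdet (by rcases hδ with rfl | rfl <;> norm_num)
      (by rcases hδ' with rfl | rfl <;> norm_num)
    obtain ⟨θ, hθ0, hθ, hexp⟩ := exists_exp_mul_I_eq (h.delta_eq hT hdet hδ hδ').2
    obtain ⟨-, hε1, him⟩ := h.epsilon_eq hT hdet hδ hδ' hε hε'
    have hlam := h.entry22_eq_re hT hdet
    have h11 : Λ 1 1 = ((Λ 2 2).re : ℂ) * Λ 0 0 := by rw [h.entry11_eq hT, ← hlam, mul_comm]
    refine ⟨Λ, hdet, hI, hT, θ, (Λ 2 2).re, hθ0, hθ, h.re_entry22_ne_zero hT hdet, hexp.symm,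
      by rw [hexp, h11], hlam, hε1, by rwa [hexp], ?_⟩
    rw [hexp, ← h11]
    exact h.entry31_eq hT hdet hδ hδ' hε hε'
  · have h := intertwinesCoeffs_of_intertwines hωb hse hI
    exact ⟨(h.epsilon_eq hT hdet hδ hδ' hε hε').1, (h.delta_eq hT hdet hδ hδ').1,
      h.params_eq hT hdet hδ hδ'⟩

/-- Lemma 3.8: the complex structures `J` and `J'` determined by the equations (★) with
admissible parameters are equivalent if and only if there is a ℂ-linear isomorphism
`F(ω'^i) = Σ_j λ^i_j ω^j` commuting with `d`, triangular, and satisfying the normalizations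
`λ¹₁ = e^{iθ}`, `λ²₂ = λ e^{iθ}`, `λ³₃ = λ`, `ε(1−λ) = 0`, `Im(e^{iθ} conj(λ²₁)) = 0` and
`λ e^{iθ} λ⁴₂ − ν λ²₁ λ⁴₄ = 0`; moreover, for any such `F` the parameters are related by
`ε' = ε`, `δ' = δ`, `a' = a λ⁴₄/((λ¹₁)² λ³₃)`, `B' = B λ⁴₄`, `ν' = ν λ⁴₄/(λ¹₁ (λ³₃)²)`. -/
theorem equivalence_iff_normalized_intertwiner
    {g g' : Type*} [LieRing g] [LieAlgebra ℝ g] [LieRing g'] [LieAlgebra ℝ g']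
    (h8 : Module.finrank ℝ g = 8) (hg : IsNilpotentLie g)
    (Jc : ComplexStructure g) (hw : Jc.IsWnN)
    (h8' : Module.finrank ℝ g' = 8) (hg' : IsNilpotentLie g')
    (Jc' : ComplexStructure g') (hw' : Jc'.IsWnN)
    (ω : Fin 4 → (g →ₗ[ℝ] ℂ)) (ε δ ν a : ℝ) (B : ℂ)
    (hωb : Is10Basis Jc ω) (had : Admissible ε δ ν a B) (hse : StarEq ω ε δ ν (a : ℂ) B)
    (ω' : Fin 4 → (g' →ₗ[ℝ] ℂ)) (ε' δ' ν' a' : ℝ) (B' : ℂ)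
    (hωb' : Is10Basis Jc' ω') (had' : Admissible ε' δ' ν' a' B')
    (hse' : StarEq ω' ε' δ' ν' (a' : ℂ) B') :
    (Jc.Equiv Jc' ↔
      ∃ Λ : Matrix (Fin 4) (Fin 4) ℂ, Λ.det ≠ 0 ∧
        Intertwines ω Λ ε' δ' ν' (a' : ℂ) B' ∧ TriangularPat Λ ∧
        ∃ (θ lam : ℝ), 0 ≤ θ ∧ θ < 2 * Real.pi ∧ lam ≠ 0 ∧
          Λ 0 0 = Complex.exp ((θ : ℂ) * Complex.I) ∧
          Λ 1 1 = (lam : ℂ) * Complex.exp ((θ : ℂ) * Complex.I) ∧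
          Λ 2 2 = (lam : ℂ) ∧
          ε * (1 - lam) = 0 ∧
          (Complex.exp ((θ : ℂ) * Complex.I) * (starRingEnd ℂ) (Λ 1 0)).im = 0 ∧
          (lam : ℂ) * Complex.exp ((θ : ℂ) * Complex.I) * Λ 3 1
            - (ν : ℂ) * Λ 1 0 * Λ 3 3 = 0) ∧
    (∀ Λ : Matrix (Fin 4) (Fin 4) ℂ, Λ.det ≠ 0 →
      Intertwines ω Λ ε' δ' ν' (a' : ℂ) B' → TriangularPat Λ →
        ε' = ε ∧ δ' = δ ∧
        (a' : ℂ) = (a : ℂ) * Λ 3 3 / ((Λ 0 0) ^ 2 * Λ 2 2) ∧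
        B' = B * Λ 3 3 ∧
        (ν' : ℂ) = (ν : ℂ) * Λ 3 3 / (Λ 0 0 * (Λ 2 2) ^ 2)) :=
  equivalence_iff_normalized_intertwiner_general Jc Jc' ω ε δ ν a B hωb had hse ω' ε' δ' ν' a' B'
    hωb' had' hse'

end Paper
end
end

section
/- Let g be an 8-dimensional nilpotent Lie algebra with strongly non-nilpotent complex structure J belonging to Family I, i.e., admitting a (1,0)-basis {ω¹,…,ω⁴} with dω¹ = 0, dω² = ε ω^{1 1̄}, dω³ = ω¹⁴ + ω^{1 4̄} + a ω^{2 1̄} + iδεb ω^{1 2̄}, dω⁴ = iν ω^{1 1̄} + b ω^{2 2̄} + iδ(ω^{1 3̄} − ω^{3 1̄}), where δ = ±1, ε, ν ∈ {0,1} and (a,b) ∈ ℝ² ∖ {(0,0)} with a ≥ 0. Then (g,J) does not admit any pseudo-Kähler structure. -/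
/-!
Let `X₁, …, X₄` be the real vectors dual to the (1,0)-basis, `ωʲ(X_k) = δ_{jk}`; in the code they
are `hω.frame k` with `k : Fin 4` counted from `0`, so `hω.frame k` is dual to `ω^{k+1}` and
`ω 0, …, ω 3` are the paper's `ω¹, …, ω⁴`. Together with the `JX_k` they form a real basis of `g`,
and the structure equations give their brackets explicitly, e.g. `[X₁, X₄] = -2 X₃` and
`[X₁, X₃] = -2δ JX₄`. Evaluating `dF = 0` on ten triples of frame vectors, starting with
`(X₁, X₄, JX₄)`, shows one value at a time that `F(JX₄, ·)` vanishes on the whole frame, so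
`JX₄ = 0` by nondegeneracy, which is absurd.
-/
noncomputable section

open Complex Module
open scoped TensorProduct

namespace Paper

variable {g : Type*} [LieRing g] [LieAlgebra ℝ g]

variable {g : Type*} [LieRing g] [LieAlgebra ℝ g] in
/-- The admissible parameters `(a,B)` for pseudo-Kähler WnN structures in Theorem 5.1 i). -/
def PKParam (a : ℝ) (B : ℂ) : Prop := (a = 0 ∧ (B = 0 ∨ B = 1)) ∨ (a = 1 ∧ 0 ≤ B.im)

variable {g : Type*} [LieRing g] [LieAlgebra ℝ g] in
/-- The structure equations (5.2) of a pseudo-Kähler WnN complex structure: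
`dω¹ = 0`, `dω² = ω¹³ + ω^{1 3̄}`, `dω³ = iδ(ω^{1 2̄} − ω^{2 1̄})`,
`dω⁴ = a ω¹² + ω²³ + B ω^{1 1̄} + ω^{2 3̄}`; this is (★) with `ε = 0`, `ν = 1`. -/
def PKStarEq (ω : Fin 4 → (g →ₗ[ℝ] ℂ)) (δ a : ℝ) (B : ℂ) : Prop :=
  StarEq ω 0 δ 1 (a : ℂ) B

variable {g : Type*} [LieRing g] [LieAlgebra ℝ g] in
/-- The fundamental form
`F = iu ω^{1 1̄} − is ω^{2 2̄} − iδr ω^{3 3̄} + v ω^{1 2̄} − v ω^{2 1̄} + iaδ(r−is) ω^{1 3̄}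
   + iaδ(r+is) ω^{3 1̄} + (r+is) ω^{1 4̄} − (r−is) ω^{4 1̄}` of Theorem 5.1 i). -/
def pkFundForm (ω : Fin 4 → (g →ₗ[ℝ] ℂ)) (δ a r s u v : ℝ) (X Y : g) : ℂ :=
  Complex.I * (u : ℂ) * w2 (⇑(ω 0)) (cF ⇑(ω 0)) X Y
  - Complex.I * (s : ℂ) * w2 (⇑(ω 1)) (cF ⇑(ω 1)) X Y
  - Complex.I * (δ : ℂ) * (r : ℂ) * w2 (⇑(ω 2)) (cF ⇑(ω 2)) X Y
  + (v : ℂ) * w2 (⇑(ω 0)) (cF ⇑(ω 1)) X Y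
  - (v : ℂ) * w2 (⇑(ω 1)) (cF ⇑(ω 0)) X Y
  + Complex.I * (a : ℂ) * (δ : ℂ) * ((r : ℂ) - Complex.I * (s : ℂ))
      * w2 (⇑(ω 0)) (cF ⇑(ω 2)) X Y
  + Complex.I * (a : ℂ) * (δ : ℂ) * ((r : ℂ) + Complex.I * (s : ℂ))
      * w2 (⇑(ω 2)) (cF ⇑(ω 0)) X Y
  + ((r : ℂ) + Complex.I * (s : ℂ)) * w2 (⇑(ω 0)) (cF ⇑(ω 3)) X Y
  - ((r : ℂ) - Complex.I * (s : ℂ)) * w2 (⇑(ω 3)) (cF ⇑(ω 0)) X Y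

variable {g : Type*} [LieRing g] [LieAlgebra ℝ g] in
/-- The structure equations of Family I of SnN complex structures in dimension 8:
`dω¹ = 0`, `dω² = ε ω^{1 1̄}`, `dω³ = ω¹⁴ + ω^{1 4̄} + a ω^{2 1̄} + iδεb ω^{1 2̄}`,
`dω⁴ = iν ω^{1 1̄} + b ω^{2 2̄} + iδ(ω^{1 3̄} − ω^{3 1̄})`. -/
def FamilyIEq (ω : Fin 4 → (g →ₗ[ℝ] ℂ)) (ε δ ν a b : ℝ) : Prop :=
  (∀ X Y : g, dd (⇑(ω 0)) X Y = 0) ∧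
  (∀ X Y : g, dd (⇑(ω 1)) X Y = (ε : ℂ) * w2 (⇑(ω 0)) (cF ⇑(ω 0)) X Y) ∧
  (∀ X Y : g, dd (⇑(ω 2)) X Y
      = w2 (⇑(ω 0)) (⇑(ω 3)) X Y + w2 (⇑(ω 0)) (cF ⇑(ω 3)) X Y
        + (a : ℂ) * w2 (⇑(ω 1)) (cF ⇑(ω 0)) X Y
        + Complex.I * (δ : ℂ) * (ε : ℂ) * (b : ℂ) * w2 (⇑(ω 0)) (cF ⇑(ω 1)) X Y) ∧
  (∀ X Y : g, dd (⇑(ω 3)) X Y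
      = Complex.I * (ν : ℂ) * w2 (⇑(ω 0)) (cF ⇑(ω 0)) X Y
        + (b : ℂ) * w2 (⇑(ω 1)) (cF ⇑(ω 1)) X Y
        + Complex.I * (δ : ℂ)
            * (w2 (⇑(ω 0)) (cF ⇑(ω 2)) X Y - w2 (⇑(ω 2)) (cF ⇑(ω 0)) X Y))


namespace Is10Basis

variable {Jc : ComplexStructure g} {ω : Fin 4 → (g →ₗ[ℝ] ℂ)}

def equiv (hω : Is10Basis Jc ω) : g ≃ₗ[ℝ] (Fin 4 → ℂ) :=
  LinearEquiv.ofBijective (LinearMap.pi ω) hω.2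

def frame (hω : Is10Basis Jc ω) (k : Fin 4) : g := hω.equiv.symm (Pi.single k 1)

theorem apply_frame (hω : Is10Basis Jc ω) (j k : Fin 4) :
    ω j (hω.frame k) = if j = k then 1 else 0 := by
  change hω.equiv (hω.equiv.symm _) j = _
  simp [Pi.single_apply]

theorem apply_J (hω : Is10Basis Jc ω) (j : Fin 4) (X : g) : ω j (Jc.J X) = I * ω j X :=
  hω.1 j X

theorem ext (hω : Is10Basis Jc ω) {X Y : g} (h : ∀ j, ω j X = ω j Y) : X = Y :=
  hω.equiv.injective (funext h)

theorem eq_sum_frame (hω : Is10Basis Jc ω) (X : g) :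
    X = ∑ k, ((ω k X).re • hω.frame k + (ω k X).im • Jc.J (hω.frame k)) := by
  refine hω.ext fun j => ?_
  simp [map_sum, hω.apply_frame, hω.apply_J, Complex.real_smul, Finset.sum_add_distrib]

theorem linearMap_eq_zero (hω : Is10Basis Jc ω) {f : g →ₗ[ℝ] ℝ}
    (h : ∀ k, f (hω.frame k) = 0) (hJ : ∀ k, f (Jc.J (hω.frame k)) = 0) : f = 0 := by
  ext X
  rw [hω.eq_sum_frame X]
  simp [h, hJ]

end Is10Basis

namespace PseudoKahlerForm

variable {Jc : ComplexStructure g} (pk : PseudoKahlerForm Jc)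

theorem apply_self (X : g) : pk.F X X = 0 := by
  linarith [pk.antisymm X X]

theorem apply_J_left (X Y : g) : pk.F (Jc.J X) Y = -pk.F X (Jc.J Y) := by
  have h := pk.compat X (Jc.J Y)
  rw [Jc.j_sq, map_neg] at h
  linarith

theorem apply_eq_zero_comm {X Y : g} : pk.F X Y = 0 ↔ pk.F Y X = 0 := by
  rw [pk.antisymm, neg_eq_zero]

theorem eq_zero_of_frame {ω : Fin 4 → (g →ₗ[ℝ] ℂ)} (hω : Is10Basis Jc ω) {X : g}
    (h : ∀ k, pk.F X (hω.frame k) = 0) (hJ : ∀ k, pk.F X (Jc.J (hω.frame k)) = 0) : X = 0 :=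
  pk.nondeg X fun Y => LinearMap.congr_fun (hω.linearMap_eq_zero h hJ) Y

end PseudoKahlerForm

theorem apply_lie_eq_neg_dd (α : g →ₗ[ℝ] ℂ) (X Y : g) : α ⁅X, Y⁆ = -dd (⇑α) X Y :=
  (neg_neg _).symm

namespace FamilyIEq

variable {Jc : ComplexStructure g} {ω : Fin 4 → (g →ₗ[ℝ] ℂ)} (hω : Is10Basis Jc ω)
  {ε δ ν a b : ℝ}

local notation "𝐗" => hω.frame
local notation "𝐉" => Jc.J

theorem lie_X0_X3 (heq : FamilyIEq ω ε δ ν a b) : ⁅𝐗 0, 𝐗 3⁆ = (-2 : ℝ) • 𝐗 2 :=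
  hω.ext fun j => by
    fin_cases j <;> simp [apply_lie_eq_neg_dd, heq.1, heq.2, w2, cF, hω.apply_frame]
    ring

theorem lie_X0_JX3 (heq : FamilyIEq ω ε δ ν a b) : ⁅𝐗 0, 𝐉 (𝐗 3)⁆ = 0 :=
  hω.ext fun j => by
    fin_cases j <;> simp [apply_lie_eq_neg_dd, heq.1, heq.2, w2, cF, hω.apply_frame, hω.apply_J]

theorem lie_JX0_X3 (heq : FamilyIEq ω ε δ ν a b) :
    ⁅𝐉 (𝐗 0), 𝐗 3⁆ = (-2 : ℝ) • 𝐉 (𝐗 2) :=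
  hω.ext fun j => by
    fin_cases j <;> simp [apply_lie_eq_neg_dd, heq.1, heq.2, w2, cF, hω.apply_frame, hω.apply_J]
    ring

theorem lie_JX0_JX3 (heq : FamilyIEq ω ε δ ν a b) : ⁅𝐉 (𝐗 0), 𝐉 (𝐗 3)⁆ = 0 :=
  hω.ext fun j => by
    fin_cases j <;> simp [apply_lie_eq_neg_dd, heq.1, heq.2, w2, cF, hω.apply_frame, hω.apply_J]

theorem lie_X0_X2 (heq : FamilyIEq ω ε δ ν a b) : ⁅𝐗 0, 𝐗 2⁆ = (-2 * δ) • 𝐉 (𝐗 3) :=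
  hω.ext fun j => by
    fin_cases j <;> simp [apply_lie_eq_neg_dd, heq.1, heq.2, w2, cF, hω.apply_frame, hω.apply_J]
    ring

theorem lie_X0_JX2 (heq : FamilyIEq ω ε δ ν a b) : ⁅𝐗 0, 𝐉 (𝐗 2)⁆ = 0 :=
  hω.ext fun j => by
    fin_cases j <;> simp [apply_lie_eq_neg_dd, heq.1, heq.2, w2, cF, hω.apply_frame, hω.apply_J]

theorem lie_X0_X1 (heq : FamilyIEq ω ε δ ν a b) :
    ⁅𝐗 0, 𝐗 1⁆ = a • 𝐗 2 - (δ * ε * b) • 𝐉 (𝐗 2) :=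
  hω.ext fun j => by
    fin_cases j <;> simp [apply_lie_eq_neg_dd, heq.1, heq.2, w2, cF, hω.apply_frame,
      hω.apply_J, Complex.ext_iff]

theorem lie_X0_JX1 (heq : FamilyIEq ω ε δ ν a b) :
    ⁅𝐗 0, 𝐉 (𝐗 1)⁆ = a • 𝐉 (𝐗 2) - (δ * ε * b) • 𝐗 2 :=
  hω.ext fun j => by
    fin_cases j <;> simp [apply_lie_eq_neg_dd, heq.1, heq.2, w2, cF, hω.apply_frame,
      hω.apply_J, Complex.ext_iff]

theorem lie_X0_JX0 (heq : FamilyIEq ω ε δ ν a b) :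
    ⁅𝐗 0, 𝐉 (𝐗 0)⁆ = (2 * ε) • 𝐉 (𝐗 1) - (2 * ν) • 𝐗 3 :=
  hω.ext fun j => by
    fin_cases j <;> simp [apply_lie_eq_neg_dd, heq.1, heq.2, w2, cF, hω.apply_frame,
      hω.apply_J, Complex.ext_iff] <;> ring

theorem lie_X2_JX0 (heq : FamilyIEq ω ε δ ν a b) : ⁅𝐗 2, 𝐉 (𝐗 0)⁆ = 0 :=
  hω.ext fun j => by
    fin_cases j <;> simp [apply_lie_eq_neg_dd, heq.1, heq.2, w2, cF, hω.apply_frame, hω.apply_J]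

theorem lie_JX2_JX0 (heq : FamilyIEq ω ε δ ν a b) :
    ⁅𝐉 (𝐗 2), 𝐉 (𝐗 0)⁆ = (2 * δ) • 𝐉 (𝐗 3) :=
  hω.ext fun j => by
    fin_cases j <;> simp [apply_lie_eq_neg_dd, heq.1, heq.2, w2, cF, hω.apply_frame, hω.apply_J]
    ring

theorem lie_eq_zero_of_apply_eq_zero (hω : Is10Basis Jc ω) (heq : FamilyIEq ω ε δ ν a b)
    {X Y : g} (hX : ω 0 X = 0) (hY : ω 0 Y = 0) (h1 : ω 1 X = 0 ∨ ω 1 Y = 0) : ⁅X, Y⁆ = 0 :=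
  hω.ext fun j => by
    rcases h1 with h1 | h1 <;> fin_cases j <;>
      simp [apply_lie_eq_neg_dd, heq.1, heq.2, w2, cF, hX, hY, h1]

variable (pk : PseudoKahlerForm Jc)

theorem F_X2_JX3_eq_zero (heq : FamilyIEq ω ε δ ν a b) : pk.F (𝐗 2) (𝐉 (𝐗 3)) = 0 := by
  simpa [heq.lie_X0_X3, heq.lie_X0_JX3, heq.lie_eq_zero_of_apply_eq_zero hω, hω.apply_frame,
    hω.apply_J] using pk.closed (𝐗 0) (𝐗 3) (𝐉 (𝐗 3))

theorem F_JX2_JX3_eq_zero (heq : FamilyIEq ω ε δ ν a b) : pk.F (𝐉 (𝐗 2)) (𝐉 (𝐗 3)) = 0 := by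
  simpa [heq.lie_JX0_X3, heq.lie_JX0_JX3, heq.lie_eq_zero_of_apply_eq_zero hω, hω.apply_frame,
    hω.apply_J] using pk.closed (𝐉 (𝐗 0)) (𝐗 3) (𝐉 (𝐗 3))

theorem F_X2_X3_eq_zero (heq : FamilyIEq ω ε δ ν a b) : pk.F (𝐗 2) (𝐗 3) = 0 := by
  rw [← pk.compat, heq.F_JX2_JX3_eq_zero hω pk]

theorem F_JX2_X3_eq_zero (heq : FamilyIEq ω ε δ ν a b) : pk.F (𝐉 (𝐗 2)) (𝐗 3) = 0 := by
  rw [pk.apply_J_left, heq.F_X2_JX3_eq_zero hω pk, neg_zero]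

theorem F_JX3_X3_eq_zero (heq : FamilyIEq ω ε δ ν a b) (hδ : δ ≠ 0) :
    pk.F (𝐉 (𝐗 3)) (𝐗 3) = 0 := by
  simpa [heq.lie_X0_X3, heq.lie_X0_X2, heq.lie_eq_zero_of_apply_eq_zero hω, hω.apply_frame,
    pk.apply_self, hδ] using pk.closed (𝐗 0) (𝐗 3) (𝐗 2)

theorem F_X2_JX2_eq_zero (heq : FamilyIEq ω ε δ ν a b) : pk.F (𝐗 2) (𝐉 (𝐗 2)) = 0 := by
  simpa [heq.lie_X0_X3, heq.lie_X0_JX2, heq.lie_eq_zero_of_apply_eq_zero hω, hω.apply_frame,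
    hω.apply_J] using pk.closed (𝐗 0) (𝐗 3) (𝐉 (𝐗 2))

theorem F_JX3_X1_eq_zero (heq : FamilyIEq ω ε δ ν a b) (hδ : δ ≠ 0) :
    pk.F (𝐉 (𝐗 3)) (𝐗 1) = 0 := by
  simpa [heq.lie_X0_X1, heq.lie_X0_X2, heq.lie_eq_zero_of_apply_eq_zero hω, hω.apply_frame,
    pk.apply_self, hδ, pk.apply_eq_zero_comm.1 (heq.F_X2_JX2_eq_zero hω pk)] using
    pk.closed (𝐗 0) (𝐗 1) (𝐗 2)

theorem F_JX3_JX1_eq_zero (heq : FamilyIEq ω ε δ ν a b) (hδ : δ ≠ 0) :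
    pk.F (𝐉 (𝐗 3)) (𝐉 (𝐗 1)) = 0 := by
  simpa [heq.lie_X0_JX1, heq.lie_X0_X2, heq.lie_eq_zero_of_apply_eq_zero hω, hω.apply_frame,
    hω.apply_J, pk.apply_self, hδ, pk.apply_eq_zero_comm.1 (heq.F_X2_JX2_eq_zero hω pk)] using
    pk.closed (𝐗 0) (𝐉 (𝐗 1)) (𝐗 2)

theorem F_X2_X1_eq_zero (heq : FamilyIEq ω ε δ ν a b) : pk.F (𝐗 2) (𝐗 1) = 0 := by
  simpa [heq.lie_X0_X3, heq.lie_X0_X1, heq.lie_eq_zero_of_apply_eq_zero hω, hω.apply_frame,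
    heq.F_X2_X3_eq_zero hω pk, heq.F_JX2_X3_eq_zero hω pk] using pk.closed (𝐗 0) (𝐗 3) (𝐗 1)

theorem F_X2_JX1_eq_zero (heq : FamilyIEq ω ε δ ν a b) : pk.F (𝐗 2) (𝐉 (𝐗 1)) = 0 := by
  simpa [heq.lie_X0_X3, heq.lie_X0_JX1, heq.lie_eq_zero_of_apply_eq_zero hω, hω.apply_frame,
    hω.apply_J, heq.F_X2_X3_eq_zero hω pk, heq.F_JX2_X3_eq_zero hω pk] using
    pk.closed (𝐗 0) (𝐗 3) (𝐉 (𝐗 1))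

theorem F_JX3_JX0_eq_zero (heq : FamilyIEq ω ε δ ν a b) (hδ : δ ≠ 0) :
    pk.F (𝐉 (𝐗 3)) (𝐉 (𝐗 0)) = 0 := by
  simpa [heq.lie_X0_X2, heq.lie_X0_JX0, heq.lie_X2_JX0, hδ,
    pk.apply_eq_zero_comm.1 (heq.F_X2_X3_eq_zero hω pk),
    pk.apply_eq_zero_comm.1 (heq.F_X2_JX1_eq_zero hω pk)] using pk.closed (𝐗 0) (𝐗 2) (𝐉 (𝐗 0))

theorem F_JX3_X0_eq_zero (heq : FamilyIEq ω ε δ ν a b) (hδ : δ ≠ 0) :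
    pk.F (𝐉 (𝐗 3)) (𝐗 0) = 0 := by
  have hJ12 : pk.F (𝐉 (𝐗 1)) (𝐉 (𝐗 2)) = 0 := by
    rw [pk.compat, pk.apply_eq_zero_comm, heq.F_X2_X1_eq_zero hω pk]
  simpa [heq.lie_X0_JX2, heq.lie_X0_JX0, heq.lie_JX2_JX0, hδ, hJ12,
    pk.apply_eq_zero_comm.1 (heq.F_JX2_X3_eq_zero hω pk)] using
    pk.closed (𝐗 0) (𝐉 (𝐗 2)) (𝐉 (𝐗 0))

theorem J_X3_eq_zero (heq : FamilyIEq ω ε δ ν a b) (pk : PseudoKahlerForm Jc) (hδ : δ ≠ 0) :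
    𝐉 (𝐗 3) = 0 := by
  refine pk.eq_zero_of_frame hω (fun k => ?_) (fun k => ?_) <;> fin_cases k
  · exact heq.F_JX3_X0_eq_zero hω pk hδ
  · exact heq.F_JX3_X1_eq_zero hω pk hδ
  · exact pk.apply_eq_zero_comm.1 (heq.F_X2_JX3_eq_zero hω pk)
  · exact heq.F_JX3_X3_eq_zero hω pk hδ
  · exact heq.F_JX3_JX0_eq_zero hω pk hδ
  · exact heq.F_JX3_JX1_eq_zero hω pk hδ
  · exact pk.apply_eq_zero_comm.1 (heq.F_JX2_JX3_eq_zero hω pk)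
  · exact pk.apply_self _

end FamilyIEq

theorem FamilyIEq.isEmpty_pseudoKahlerForm {Jc : ComplexStructure g}
    {ω : Fin 4 → (g →ₗ[ℝ] ℂ)} {ε δ ν a b : ℝ} (heq : FamilyIEq ω ε δ ν a b)
    (hω : Is10Basis Jc ω) (hδ : δ ≠ 0) :
    IsEmpty (PseudoKahlerForm Jc) := by
  refine ⟨fun pk => ?_⟩
  have h := congrArg (ω 3) (heq.J_X3_eq_zero hω pk hδ)
  simp [hω.apply_J, hω.apply_frame] at h

theorem familyI_no_pseudoKahler_general
    {g : Type*} [LieRing g] [LieAlgebra ℝ g]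
    (Jc : ComplexStructure g)
    (ω : Fin 4 → (g →ₗ[ℝ] ℂ)) (ε δ ν a b : ℝ)
    (hωb : Is10Basis Jc ω)
    (hδ : δ = 1 ∨ δ = -1)
    (heq : FamilyIEq ω ε δ ν a b) :
    IsEmpty (PseudoKahlerForm Jc) :=
  heq.isEmpty_pseudoKahlerForm hωb (by rcases hδ with rfl | rfl <;> norm_num)

/-- (Part of the proof of Theorem 5.1): no SnN complex structure in Family I admits a
pseudo-Kähler structure. -/
theorem familyI_no_pseudoKahler
    {g : Type*} [LieRing g] [LieAlgebra ℝ g]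
    (h8 : Module.finrank ℝ g = 8) (hg : IsNilpotentLie g)
    (Jc : ComplexStructure g) (hsnn : Jc.IsSnN)
    (ω : Fin 4 → (g →ₗ[ℝ] ℂ)) (ε δ ν a b : ℝ)
    (hωb : Is10Basis Jc ω)
    (hδ : δ = 1 ∨ δ = -1) (hε : ε = 0 ∨ ε = 1) (hν : ν = 0 ∨ ν = 1)
    (hab : ¬(a = 0 ∧ b = 0)) (ha : 0 ≤ a)
    (heq : FamilyIEq ω ε δ ν a b) :
    IsEmpty (PseudoKahlerForm Jc) :=
  familyI_no_pseudoKahler_general Jc ω ε δ ν a b hωb hδ heq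

end Paper
end
end
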